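/- arXiv:2203.00627 — 6 statements merged into one kernel-verified Lean document; each statement's English description precedes it below -/
import Mathlib

section
/- Let p > 2 with 2 < p ≤ 3, and let u, v ≥ 0 be real numbers. Then for every ε ∈ (0,1), the quantity Θ := -|u - v|^{p-2}(u - v) satisfies (1 - 2ε) v^{p-1} - C(p) ε^{-(p-2)} u^{p-1} ≤ Θ ≤ (1 + ε) v^{p-1} + C(p) ε^{-1/(p-2)} u^{p-1} for some constant C(p) depending only on p. -/
open Real

/-- Weighted Young-type inequality from convexity of `x ↦ x ^ q`. -/
lemma weighted_rpow (q : ℝ) (hq : 1 ≤ q) {a b l : ℝ} (ha : 0 ≤ a) (hb : 0 ≤ b)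
    (hl : 0 < l) (hl1 : l < 1) :
    (a + b) ^ q ≤ l ^ (1 - q) * a ^ q + (1 - l) ^ (1 - q) * b ^ q := by
  have hm : (0:ℝ) < 1 - l := by linarith
  have h := (convexOn_rpow hq).2 (Set.mem_Ici.2 (div_nonneg ha hl.le))
    (Set.mem_Ici.2 (div_nonneg hb hm.le)) hl.le hm.le (by ring)
  simp only [smul_eq_mul] at h
  have e1 : l * (a / l) + (1 - l) * (b / (1 - l)) = a + b := by
    field_simp
  rw [e1] at h
  have e2 : l * (a / l) ^ q = l ^ (1 - q) * a ^ q := by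
    rw [Real.div_rpow ha hl.le, Real.rpow_sub hl, Real.rpow_one]
    field_simp
  have e3 : (1 - l) * (b / (1 - l)) ^ q = (1 - l) ^ (1 - q) * b ^ q := by
    rw [Real.div_rpow hb hm.le, Real.rpow_sub hm, Real.rpow_one]
    field_simp
  rw [e2, e3] at h
  exact h

lemma rpow_mul_self {p : ℝ} (hp : 2 < p) {x : ℝ} (hx : 0 ≤ x) :
    x ^ (p - 2) * x = x ^ (p - 1) := by
  rcases eq_or_lt_of_le hx with h | h
  · rw [← h, Real.zero_rpow (by intro hc; linarith), Real.zero_rpow (by intro hc; linarith),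
      mul_zero]
  · rw [show p - 1 = (p - 2) + 1 by ring, Real.rpow_add_one (ne_of_gt h)]

/-- For `2 < p ≤ 3`, there is `C = C(p) > 0` such that for every `ε ∈ (0,1)` and all
nonnegative reals `u, v`, the quantity `Θ = -|u - v|^{p-2}(u - v)` satisfies
`(1 - 2ε) v^{p-1} - C ε^{-(p-2)} u^{p-1} ≤ Θ ≤ (1 + ε) v^{p-1} + C ε^{-1/(p-2)} u^{p-1}`. -/
theorem stmt2 (p : ℝ) (hp2 : 2 < p) (hp3 : p ≤ 3) :
    ∃ C : ℝ, 0 < C ∧ ∀ ε : ℝ, 0 < ε → ε < 1 → ∀ u v : ℝ, 0 ≤ u → 0 ≤ v →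
      (1 - 2 * ε) * v ^ (p - 1) - C * ε ^ (-(p - 2)) * u ^ (p - 1) ≤
          -(|u - v| ^ (p - 2) * (u - v)) ∧
      -(|u - v| ^ (p - 2) * (u - v)) ≤
          (1 + ε) * v ^ (p - 1) + C * ε ^ (-(1 / (p - 2))) * u ^ (p - 1) := by
  refine ⟨2, by norm_num, fun ε hε hε1 u v hu hv => ?_⟩
  have hp1 : 1 < p - 1 := by linarith
  have hE : (0:ℝ) < ε ^ (-(p - 2)) := Real.rpow_pos_of_pos hε _
  have hE' : (0:ℝ) < ε ^ (-(1 / (p - 2))) := Real.rpow_pos_of_pos hε _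
  have huq : (0:ℝ) ≤ u ^ (p - 1) := Real.rpow_nonneg hu _
  have hvq : (0:ℝ) ≤ v ^ (p - 1) := Real.rpow_nonneg hv _
  rcases le_total u v with h | h
  · -- u ≤ v : Θ = (v - u)^(p-1)
    have habs : |u - v| = v - u := by rw [abs_sub_comm]; exact abs_of_nonneg (by linarith)
    have hΘ : -(|u - v| ^ (p - 2) * (u - v)) = (v - u) ^ (p - 1) := by
      rw [habs, show u - v = -(v - u) by ring, mul_neg, neg_neg,
        rpow_mul_self (by linarith : 2 < p) (by linarith : (0:ℝ) ≤ v - u)]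
    rw [hΘ]
    have hX : (0:ℝ) ≤ (v - u) ^ (p - 1) := Real.rpow_nonneg (by linarith) _
    have hvu : (v - u) ^ (p - 1) ≤ v ^ (p - 1) :=
      Real.rpow_le_rpow (by linarith) (by linarith) (by linarith)
    constructor
    · -- key: v^(p-1) ≤ (1+ε)(v-u)^(p-1) + 2 ε^(-(p-2)) u^(p-1)
      have hl : (0:ℝ) < 1 / (1 + ε) := by positivity
      have hl1 : 1 / (1 + ε) < 1 := by
        rw [div_lt_one (by linarith)]; linarith
      have key := weighted_rpow (p - 1) (by linarith) (a := v - u) (b := u)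
        (by linarith) hu hl hl1
      have e0 : v - u + u = v := by ring
      rw [e0] at key
      have c1 : (1 / (1 + ε) : ℝ) ^ (1 - (p - 1)) ≤ 1 + ε := by
        rw [one_div, Real.inv_rpow (by linarith), ← Real.rpow_neg (by linarith)]
        calc (1 + ε) ^ (-(1 - (p - 1))) ≤ (1 + ε) ^ (1:ℝ) := by
              apply Real.rpow_le_rpow_of_exponent_le (by linarith)
              linarith
          _ = 1 + ε := Real.rpow_one _
      have c2 : (1 - 1 / (1 + ε) : ℝ) ^ (1 - (p - 1)) ≤ 2 * ε ^ (-(p - 2)) := by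
        have e1 : (1 - 1 / (1 + ε) : ℝ) = ε / (1 + ε) := by field_simp; ring
        rw [e1]
        have e2 : (ε / (1 + ε) : ℝ) ^ (1 - (p - 1)) = ((1 + ε) / ε) ^ (p - 2) := by
          rw [show (1 - (p - 1) : ℝ) = -(p - 2) by ring, Real.rpow_neg (by positivity),
            ← Real.inv_rpow (by positivity), inv_div]
        rw [e2]
        calc ((1 + ε) / ε : ℝ) ^ (p - 2) ≤ (2 / ε) ^ (p - 2) := by
              apply Real.rpow_le_rpow (by positivity) ?_ (by linarith)
              gcongr
              linarith
          _ = 2 ^ (p - 2) / ε ^ (p - 2) := Real.div_rpow (by norm_num) hε.le _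
          _ ≤ 2 / ε ^ (p - 2) := by
              gcongr
              calc (2:ℝ) ^ (p - 2) ≤ (2:ℝ) ^ (1:ℝ) :=
                    Real.rpow_le_rpow_of_exponent_le (by norm_num) (by linarith)
                _ = 2 := Real.rpow_one 2
          _ = 2 * ε ^ (-(p - 2)) := by
              rw [Real.rpow_neg hε.le]; ring
      have key2 : v ^ (p - 1) ≤ (1 + ε) * (v - u) ^ (p - 1)
          + (2 * ε ^ (-(p - 2))) * u ^ (p - 1) := by
        calc v ^ (p - 1) ≤ (1 / (1 + ε)) ^ (1 - (p - 1)) * (v - u) ^ (p - 1)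
              + (1 - 1 / (1 + ε)) ^ (1 - (p - 1)) * u ^ (p - 1) := key
          _ ≤ (1 + ε) * (v - u) ^ (p - 1) + (2 * ε ^ (-(p - 2))) * u ^ (p - 1) := by
              gcongr
      nlinarith [mul_nonneg hε.le hvq, mul_nonneg hε.le hX,
        mul_nonneg (mul_nonneg hε.le hε.le) hX,
        mul_nonneg hε.le (mul_nonneg hE.le huq)]
    · -- easy upper bound
      nlinarith [mul_nonneg hε.le hvq, mul_nonneg hE'.le huq]
  · -- v ≤ u : Θ = -(u - v)^(p-1)
    have habs : |u - v| = u - v := abs_of_nonneg (by linarith)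
    have hΘ : -(|u - v| ^ (p - 2) * (u - v)) = -((u - v) ^ (p - 1)) := by
      rw [habs, rpow_mul_self (by linarith : 2 < p) (by linarith : (0:ℝ) ≤ u - v)]
    rw [hΘ]
    have hX : (0:ℝ) ≤ (u - v) ^ (p - 1) := Real.rpow_nonneg (by linarith) _
    have h1 : v ^ (p - 1) ≤ u ^ (p - 1) :=
      Real.rpow_le_rpow hv h (by linarith)
    have h2 : (u - v) ^ (p - 1) ≤ u ^ (p - 1) :=
      Real.rpow_le_rpow (by linarith) (by linarith) (by linarith)
    have hE1 : (1:ℝ) ≤ ε ^ (-(p - 2)) := by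
      rw [Real.rpow_neg hε.le, ← Real.inv_rpow hε.le]
      exact Real.one_le_rpow (by rw [le_inv_comm₀ one_pos hε]; linarith) (by linarith)
    constructor
    · nlinarith [mul_nonneg (by linarith : (0:ℝ) ≤ ε ^ (-(p - 2)) - 1) huq,
        mul_nonneg hε.le hvq]
    · nlinarith [mul_nonneg hε.le hvq, mul_nonneg hE'.le huq]
end

section
/- Let p > 3 be an integer and ε ∈ (0,1). Then for all nonnegative real numbers u, v, |v^{p-2} - |v - u|^{p-2}| ≤ ε(1 + ε) v^{p-2} + C(p) ε^{-(p-3)} u^{p-2} for some constant C(p) depending only on p. -/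
/-!
Write `q = p - 2` and `w = |v - u|`. Since `|v - w| ≤ u` and `max v w ≤ v + u`, the mean value
bound for `t ↦ t ^ q` gives `|v^q - w^q| ≤ q (v + u)^{q-1} u`. Splitting according to whether
`u ≤ δ v` or not, with `δ = ε / (q 2^{q-1})`, the factor `(v + u)^{q-1}` is at most `(2v)^{q-1}`
in the first case and at most `(2u/δ)^{q-1}` in the second, which produces the two terms.
-/

lemma abs_pow_sub_abs_sub_pow_le {u v : ℝ} (hu : 0 ≤ u) (hv : 0 ≤ v) (n : ℕ) :
    |v ^ n - |v - u| ^ n| ≤ n * (v + u) ^ (n - 1) * u := by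
  have hdiff : abs (v - |v - u|) ≤ u := by
    simpa [abs_of_nonneg hu, abs_of_nonneg hv] using abs_abs_sub_abs_le_abs_sub v (v - u)
  have hmax : max |v| |(|v - u|)| ≤ v + u := by
    rw [abs_of_nonneg hv, abs_abs, max_le_iff, abs_le']
    exact ⟨by linarith, by linarith, by linarith⟩
  calc |v ^ n - |v - u| ^ n| ≤ abs (v - |v - u|) * n * max |v| |(|v - u|)| ^ (n - 1) :=
        abs_pow_sub_pow_le ..
    _ ≤ u * n * (v + u) ^ (n - 1) := by gcongr
    _ = n * (v + u) ^ (n - 1) * u := by ring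

lemma add_pow_mul_le {x y δ : ℝ} (hx : 0 ≤ x) (hy : 0 ≤ y) (hδ : 0 < δ) (hδ1 : δ ≤ 1) (m : ℕ) :
    (x + y) ^ m * y ≤ 2 ^ m * (δ * x ^ (m + 1) + (δ ^ m)⁻¹ * y ^ (m + 1)) := by
  have hx' : 0 ≤ δ * x ^ (m + 1) := by positivity
  have hy' : 0 ≤ (δ ^ m)⁻¹ * y ^ (m + 1) := by positivity
  rcases le_or_gt y (δ * x) with hsmall | hlarge
  · have hyx : y ≤ x := hsmall.trans (mul_le_of_le_one_left hx hδ1)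
    calc (x + y) ^ m * y ≤ (2 * x) ^ m * (δ * x) := by gcongr; linarith
      _ = 2 ^ m * (δ * x ^ (m + 1)) := by ring
      _ ≤ _ := by gcongr; linarith
  · have hxy : x ≤ y / δ := by rw [le_div_iff₀ hδ]; linarith
    have hyy : y ≤ y / δ := le_div_self hy hδ hδ1
    calc (x + y) ^ m * y ≤ (2 * (y / δ)) ^ m * y := by gcongr; linarith
      _ = 2 ^ m * ((δ ^ m)⁻¹ * y ^ (m + 1)) := by rw [mul_pow, div_pow]; ring
      _ ≤ _ := by gcongr; linarith

/-- For an integer `p > 3`, there is `C = C(p) > 0` such that for every `ε ∈ (0,1)` and all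
nonnegative reals `u, v`,
`|v^{p-2} - |v - u|^{p-2}| ≤ ε(1 + ε) v^{p-2} + C ε^{-(p-3)} u^{p-2}`. -/
theorem stmt4 (p : ℕ) (hp : 3 < p) :
    ∃ C : ℝ, 0 < C ∧ ∀ ε : ℝ, 0 < ε → ε < 1 → ∀ u v : ℝ, 0 ≤ u → 0 ≤ v →
      |v ^ ((p : ℝ) - 2) - |v - u| ^ ((p : ℝ) - 2)| ≤
        ε * (1 + ε) * v ^ ((p : ℝ) - 2) + C * ε ^ (-((p : ℝ) - 3)) * u ^ ((p : ℝ) - 2) := by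
  obtain ⟨m, rfl⟩ : ∃ m, p = m + 3 := ⟨p - 3, by omega⟩
  set K : ℝ := (m + 1) * 2 ^ m
  have hK : 1 ≤ K := one_le_mul_of_one_le_of_one_le (by simp) (one_le_pow₀ one_le_two)
  refine ⟨K ^ (m + 1), by positivity, fun ε hε hε1 u v hu hv => ?_⟩
  have hexp2 : ((m + 3 : ℕ) : ℝ) - 2 = ((m + 1 : ℕ) : ℝ) := by push_cast; ring
  have hexp3 : ((m + 3 : ℕ) : ℝ) - 3 = (m : ℝ) := by push_cast; ring
  rw [hexp2, hexp3, Real.rpow_neg hε.le]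
  simp only [Real.rpow_natCast]
  have hδ : 0 < ε / K := by positivity
  have hδ1 : ε / K ≤ 1 := (div_le_one₀ (by positivity)).2 (by linarith)
  have hεv : 0 ≤ ε * ε * v ^ (m + 1) := by positivity
  calc |v ^ (m + 1) - |v - u| ^ (m + 1)| ≤ (m + 1 : ℕ) * (v + u) ^ m * u :=
        abs_pow_sub_abs_sub_pow_le hu hv (m + 1)
    _ = (m + 1) * ((v + u) ^ m * u) := by push_cast; ring
    _ ≤ (m + 1) * (2 ^ m * (ε / K * v ^ (m + 1) + ((ε / K) ^ m)⁻¹ * u ^ (m + 1))) :=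
        mul_le_mul_of_nonneg_left (add_pow_mul_le hv hu hδ hδ1 m) (by positivity)
    _ = ε * v ^ (m + 1) + K ^ (m + 1) * (ε ^ m)⁻¹ * u ^ (m + 1) := by
        have hK0 : K ≠ 0 := by positivity
        rw [div_pow, inv_div]
        field_simp
        ring
    _ ≤ _ := by linarith
end

section
/- Let p > 3 be a real number. For every ε ∈ (0,1) there is a constant C(p) depending only on p such that for all nonnegative reals u, v: |v^{p-2} - |u - v|^{p-2}| ≤ 3ε(1 + 3ε) v^{p-2} + C(p) ε^{-⌊p-2⌋/(p-⌊p⌋)} u^{p-2}, where ⌊·⌋ denotes the integer part. -/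
open Real

lemma aux_rpow_sub (q a b : ℝ) (hq : 1 ≤ q) (hb : 0 ≤ b) (hba : b ≤ a) :
    a ^ q - b ^ q ≤ q * a ^ (q - 1) * (a - b) := by
  have ha : 0 ≤ a := hb.trans hba
  rcases eq_or_lt_of_le ha with h0 | h0
  · have hb0 : b = 0 := le_antisymm (hba.trans h0.symm.le) hb
    simp [← h0, hb0, Real.zero_rpow (by linarith : q ≠ 0)]
  · have hs : -1 ≤ b / a - 1 := by
      have : 0 ≤ b / a := div_nonneg hb ha
      linarith
    have hber := one_add_mul_self_le_rpow_one_add hs hq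
    have h1 : (1 : ℝ) + (b / a - 1) = b / a := by ring
    rw [h1] at hber
    have hapos : (0:ℝ) < a ^ q := Real.rpow_pos_of_pos h0 q
    have hmul : (1 + q * (b / a - 1)) * a ^ q ≤ (b / a) ^ q * a ^ q :=
      mul_le_mul_of_nonneg_right hber hapos.le
    rw [Real.div_rpow hb ha, div_mul_cancel₀ _ (ne_of_gt hapos)] at hmul
    have haq : a ^ (q - 1) * a = a ^ q := by
      rw [← Real.rpow_add_one (ne_of_gt h0)]; ring_nf
    have key : q * (b / a - 1) * a ^ q = q * a ^ (q - 1) * (b - a) := by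
      rw [← haq]; field_simp
    nlinarith [hmul, key]

lemma aux_abs_rpow_sub (q a b M : ℝ) (hq : 1 ≤ q) (ha : 0 ≤ a) (hb : 0 ≤ b)
    (haM : a ≤ M) (hbM : b ≤ M) :
    |a ^ q - b ^ q| ≤ q * M ^ (q - 1) * |a - b| := by
  have hM : 0 ≤ M := ha.trans haM
  have hMq : a ^ (q-1) ≤ M ^ (q-1) := Real.rpow_le_rpow ha haM (by linarith)
  have hMq' : b ^ (q-1) ≤ M ^ (q-1) := Real.rpow_le_rpow hb hbM (by linarith)
  rcases le_total b a with h | h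
  · rw [abs_of_nonneg (sub_nonneg.2 (Real.rpow_le_rpow hb h (by linarith))),
      abs_of_nonneg (sub_nonneg.2 h)]
    calc a ^ q - b ^ q ≤ q * a ^ (q-1) * (a - b) := aux_rpow_sub q a b hq hb h
      _ ≤ q * M ^ (q-1) * (a - b) := by
          apply mul_le_mul_of_nonneg_right _ (by linarith)
          exact mul_le_mul_of_nonneg_left hMq (by linarith)
  · rw [abs_sub_comm, abs_sub_comm a b,
      abs_of_nonneg (sub_nonneg.2 (Real.rpow_le_rpow ha h (by linarith))),
      abs_of_nonneg (sub_nonneg.2 h)]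
    calc b ^ q - a ^ q ≤ q * b ^ (q-1) * (b - a) := aux_rpow_sub q b a hq ha h
      _ ≤ q * M ^ (q-1) * (b - a) := by
          apply mul_le_mul_of_nonneg_right _ (by linarith)
          exact mul_le_mul_of_nonneg_left hMq' (by linarith)

set_option maxHeartbeats 1000000 in
/-- For a non-integer real `p > 3`, there is `C = C(p) > 0` such that for every `ε ∈ (0,1)`
and all nonnegative reals `u, v`,
`|v^{p-2} - |u - v|^{p-2}| ≤ 3ε(1 + 3ε) v^{p-2} + C ε^{-⌊p-2⌋/(p-⌊p⌋)} u^{p-2}`. -/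
theorem stmt5 (p : ℝ) (hp : 3 < p) (hpint : ¬ ∃ m : ℤ, p = m) :
    ∃ C : ℝ, 0 < C ∧ ∀ ε : ℝ, 0 < ε → ε < 1 → ∀ u v : ℝ, 0 ≤ u → 0 ≤ v →
      |v ^ (p - 2) - |u - v| ^ (p - 2)| ≤
        3 * ε * (1 + 3 * ε) * v ^ (p - 2) +
          C * ε ^ (-((⌊p - 2⌋ : ℝ) / (p - (⌊p⌋ : ℝ)))) * u ^ (p - 2) := by
  obtain ⟨α, hαdef⟩ : ∃ a : ℝ, a = (⌊p - 2⌋ : ℝ) / (p - (⌊p⌋ : ℝ)) := ⟨_, rfl⟩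
  rw [← hαdef]
  obtain ⟨q, hqdef⟩ : ∃ q : ℝ, q = p - 2 := ⟨_, rfl⟩
  rw [← hqdef]
  have hq1 : 1 < q := by rw [hqdef]; linarith
  obtain ⟨K, hKdef⟩ : ∃ K : ℝ, K = q * 2 ^ (q - 1) := ⟨_, rfl⟩
  have hKpos : 0 < K := by rw [hKdef]; positivity
  refine ⟨K + K ^ q * 3 ^ (1 - q), by positivity, ?_⟩
  intro ε hε hε1 u v hu hv
  -- floor facts
  have hfl3 : (3:ℤ) ≤ ⌊p⌋ := Int.le_floor.2 (by exact_mod_cast hp.le)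
  have hfr0 : 0 < p - (⌊p⌋:ℝ) := by
    rcases lt_or_eq_of_le (Int.floor_le p) with h | h
    · linarith
    · exact absurd ⟨⌊p⌋, h.symm⟩ hpint
  have hfr1 : p - (⌊p⌋:ℝ) < 1 := by
    have := Int.sub_one_lt_floor p
    linarith
  have hflsub : (⌊p - 2⌋ : ℝ) = (⌊p⌋:ℝ) - 2 := by
    have : ⌊p - (2:ℤ)⌋ = ⌊p⌋ - 2 := Int.floor_sub_intCast p 2
    push_cast at this ⊢
    rw [show p - 2 = p - ((2:ℤ):ℝ) by push_cast; ring] at this ⊢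
    exact_mod_cast this
  have hα : q - 1 ≤ α := by
    rw [hqdef, hαdef, hflsub, le_div_iff₀ hfr0]
    have h3 : (3:ℝ) ≤ (⌊p⌋:ℝ) := by exact_mod_cast hfl3
    nlinarith
  have hαpos : 0 < α := by
    rw [hαdef, hflsub]
    apply div_pos _ hfr0
    have h3 : (3:ℝ) ≤ (⌊p⌋:ℝ) := by exact_mod_cast hfl3
    linarith
  have hεα1 : 1 ≤ ε ^ (-α) := Real.one_le_rpow_of_pos_of_le_one_of_nonpos hε hε1.le (by linarith)
  have hεα : ε ^ (-(q-1)) ≤ ε ^ (-α) := Real.rpow_le_rpow_of_exponent_ge hε hε1.le (by linarith)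
  have hεαpos : 0 < ε ^ (-α) := Real.rpow_pos_of_pos hε _
  -- trivial case u = 0
  rcases eq_or_lt_of_le hu with hu0 | hu0
  · rw [← hu0]
    have e1 : |(0:ℝ) - v| = v := by rw [zero_sub, abs_neg, abs_of_nonneg hv]
    rw [e1, sub_self, abs_zero, Real.zero_rpow (by linarith : q ≠ 0), mul_zero, add_zero]
    positivity
  -- main estimate
  have hb : (0:ℝ) ≤ |u - v| := abs_nonneg _
  have hbM : |u - v| ≤ u + v := abs_le.2 ⟨by linarith, by linarith⟩
  have haM : v ≤ u + v := by linarith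
  have habs : abs (v - |u - v|) ≤ u := by
    have h0 := abs_abs_sub_abs_le_abs_sub v (v - u)
    rw [abs_of_nonneg hv, abs_sub_comm v u,
      show v - (v - u) = u by ring, abs_of_nonneg hu] at h0
    exact h0
  have step1 : |v ^ q - |u - v| ^ q| ≤ q * (u + v) ^ (q - 1) * u := by
    calc |v ^ q - |u - v| ^ q| ≤ q * (u + v) ^ (q-1) * abs (v - |u - v|) :=
          aux_abs_rpow_sub q v (|u-v|) (u+v) hq1.le hv hb haM hbM
      _ ≤ q * (u + v) ^ (q-1) * u := by
          apply mul_le_mul_of_nonneg_left habs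
          positivity
  have step2 : (u + v) ^ (q - 1) ≤ 2 ^ (q-1) * (u ^ (q-1) + v ^ (q-1)) := by
    rcases le_total u v with h | h
    · calc (u + v) ^ (q-1) ≤ (2 * v) ^ (q-1) :=
            Real.rpow_le_rpow (by linarith) (by linarith) (by linarith)
        _ = 2 ^ (q-1) * v ^ (q-1) := Real.mul_rpow (by norm_num) hv
        _ ≤ 2 ^ (q-1) * (u ^ (q-1) + v ^ (q-1)) := by
            have : (0:ℝ) ≤ u ^ (q-1) := by positivity
            nlinarith [Real.rpow_pos_of_pos (by norm_num : (0:ℝ) < 2) (q-1)]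
    · calc (u + v) ^ (q-1) ≤ (2 * u) ^ (q-1) :=
            Real.rpow_le_rpow (by linarith) (by linarith) (by linarith)
        _ = 2 ^ (q-1) * u ^ (q-1) := Real.mul_rpow (by norm_num) hu
        _ ≤ 2 ^ (q-1) * (u ^ (q-1) + v ^ (q-1)) := by
            have : (0:ℝ) ≤ v ^ (q-1) := by positivity
            nlinarith [Real.rpow_pos_of_pos (by norm_num : (0:ℝ) < 2) (q-1)]
  have huq : u ^ (q-1) * u = u ^ q := by
    rw [← Real.rpow_add_one (ne_of_gt hu0)]; ring_nf
  have step3 : |v ^ q - |u - v| ^ q| ≤ K * u ^ q + K * (v ^ (q-1) * u) := by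
    have h2 : q * (u + v) ^ (q-1) * u ≤ q * (2 ^ (q-1) * (u ^ (q-1) + v ^ (q-1))) * u := by
      apply mul_le_mul_of_nonneg_right _ hu
      exact mul_le_mul_of_nonneg_left step2 (by linarith)
    have h3 : q * (2 ^ (q-1) * (u ^ (q-1) + v ^ (q-1))) * u
        = K * (u ^ (q-1) * u) + K * (v ^ (q-1) * u) := by rw [hKdef]; ring
    rw [h3, huq] at h2
    linarith [step1]
  -- Young-type case split with threshold η = 3ε/K
  obtain ⟨η, hηdef⟩ : ∃ e : ℝ, e = 3 * ε / K := ⟨_, rfl⟩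
  have hηpos : 0 < η := by rw [hηdef]; positivity
  have young : K * (v ^ (q-1) * u) ≤ 3 * ε * v ^ q + K ^ q * 3 ^ (1-q) * ε ^ (-(q-1)) * u ^ q := by
    rcases le_total u (η * v) with h | h
    · have hvpos : 0 < v := by
        by_contra hc
        push_neg at hc
        have : v = 0 := le_antisymm hc hv
        rw [this] at h; simp at h; linarith
      have hvq : v ^ (q-1) * v = v ^ q := by
        rw [← Real.rpow_add_one (ne_of_gt hvpos)]; ring_nf
      have h1 : K * (v ^ (q-1) * u) ≤ K * (v ^ (q-1) * (η * v)) := by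
        apply mul_le_mul_of_nonneg_left _ hKpos.le
        apply mul_le_mul_of_nonneg_left h (by positivity)
      have h2 : K * (v ^ (q-1) * (η * v)) = 3 * ε * v ^ q := by
        rw [show v ^ (q-1) * (η * v) = η * (v ^ (q-1) * v) by ring, hvq, hηdef]
        field_simp
      have : (0:ℝ) ≤ K ^ q * 3 ^ (1-q) * ε ^ (-(q-1)) * u ^ q := by positivity
      linarith
    · -- v ≤ u / η
      have hvle : v ≤ u / η := by rw [le_div_iff₀ hηpos]; linarith [mul_comm η v ▸ h]
      have h1 : v ^ (q-1) ≤ (u / η) ^ (q-1) := Real.rpow_le_rpow hv hvle (by linarith)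
      have h2 : K * (v ^ (q-1) * u) ≤ K * ((u / η) ^ (q-1) * u) := by
        apply mul_le_mul_of_nonneg_left _ hKpos.le
        exact mul_le_mul_of_nonneg_right h1 hu
      have h3 : K * ((u / η) ^ (q-1) * u) = K ^ q * 3 ^ (1-q) * ε ^ (-(q-1)) * u ^ q := by
        have e1 : K ^ q = K ^ (q-1) * K := by
          rw [← Real.rpow_add_one (ne_of_gt hKpos)]; ring_nf
        have e2 : (3:ℝ) ^ (1-q) = ((3:ℝ) ^ (q-1))⁻¹ := by
          rw [show (1:ℝ) - q = -(q-1) by ring, Real.rpow_neg (by norm_num)]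
        have e3 : ε ^ (-(q-1)) = (ε ^ (q-1))⁻¹ := Real.rpow_neg hε.le _
        have p1 : (0:ℝ) < (3:ℝ) ^ (q-1) := by positivity
        have p2 : (0:ℝ) < ε ^ (q-1) := by positivity
        rw [Real.div_rpow hu hηpos.le, hηdef, Real.div_rpow (by positivity) hKpos.le,
          Real.mul_rpow (by norm_num) hε.le, e1, e2, e3, ← huq]
        field_simp
      have hnn : (0:ℝ) ≤ 3 * ε * v ^ q := by positivity
      linarith
  -- assemble
  have hu_q_pos : (0:ℝ) ≤ u ^ q := by positivity
  have final : |v ^ q - |u - v| ^ q| ≤ 3 * ε * v ^ q + (K + K ^ q * 3 ^ (1-q)) * ε ^ (-α) * u ^ q := by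
    have h1 : K * u ^ q ≤ K * ε ^ (-α) * u ^ q := by
      have := mul_le_mul_of_nonneg_right (mul_le_mul_of_nonneg_left hεα1 hKpos.le) hu_q_pos
      simpa using this
    have h2 : K ^ q * 3 ^ (1-q) * ε ^ (-(q-1)) * u ^ q
        ≤ K ^ q * 3 ^ (1-q) * ε ^ (-α) * u ^ q := by
      apply mul_le_mul_of_nonneg_right _ hu_q_pos
      exact mul_le_mul_of_nonneg_left hεα (by positivity)
    have h3 : (K + K ^ q * 3 ^ (1-q)) * ε ^ (-α) * u ^ q
        = K * ε ^ (-α) * u ^ q + K ^ q * 3 ^ (1-q) * ε ^ (-α) * u ^ q := by ring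
    linarith [step3, young]
  have hvq_pos : (0:ℝ) ≤ v ^ q := by positivity
  have h35 : 3 * ε * v ^ q ≤ 3 * ε * (1 + 3 * ε) * v ^ q := by nlinarith [mul_nonneg (mul_nonneg hε.le hε.le) hvq_pos]
  calc |v ^ q - |u - v| ^ q| ≤ 3 * ε * v ^ q + (K + K ^ q * 3 ^ (1-q)) * ε ^ (-α) * u ^ q := final
    _ ≤ 3 * ε * (1 + 3*ε) * v ^ q + (K + K ^ q * 3 ^ (1-q)) * ε ^ (-α) * u ^ q := by linarith
end

section
/- Let p > 3 be a real number and ε ∈ (0,1). Then for all nonnegative reals u, v, |u - v|^{p-2} ≤ (1 + 3ε) v^{p-2} + C(p) ε^{-max{p-3, ⌊p-2⌋/(p-⌊p⌋)}} u^{p-2} for some constant C(p) depending only on p. -/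
/-- For real `p > 3`, there is `C = C(p) > 0` such that for every `ε ∈ (0,1)` and all
nonnegative reals `u, v`,
`|u - v|^{p-2} ≤ (1 + 3ε) v^{p-2} + C ε^{-max{p-3, ⌊p-2⌋/(p-⌊p⌋)}} u^{p-2}`. -/
theorem stmt14 (p : ℝ) (hp : 3 < p) :
    ∃ C : ℝ, 0 < C ∧ ∀ ε : ℝ, 0 < ε → ε < 1 → ∀ u v : ℝ, 0 ≤ u → 0 ≤ v →
      |u - v| ^ (p - 2) ≤
        (1 + 3 * ε) * v ^ (p - 2) +
          C * ε ^ (-(max (p - 3) ((⌊p - 2⌋ : ℝ) / (p - (⌊p⌋ : ℝ))))) * u ^ (p - 2) := by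
  set q : ℝ := p - 2 with hq_def
  have hq : 1 < q := by simp [hq_def]; linarith
  have h2q : (0:ℝ) < 2 * q := by linarith
  refine ⟨(2 * q) ^ q, Real.rpow_pos_of_pos h2q _, ?_⟩
  intro ε hε hε1 u v hu hv
  set M : ℝ := max (p - 3) ((⌊p - 2⌋ : ℝ) / (p - (⌊p⌋ : ℝ))) with hM_def
  have hM : p - 3 ≤ M := le_max_left _ _
  set θ : ℝ := ε / (2 * q) with hθ_def
  have hθ0 : 0 < θ := div_pos hε h2q
  have hθq : θ * (2 * q) = ε := div_mul_cancel₀ _ h2q.ne'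
  have hθhalf : θ < 1 / 2 := by
    rw [hθ_def, div_lt_div_iff₀ h2q (by norm_num)]
    nlinarith
  have h1θ : 0 < 1 - θ := by linarith
  -- Step 1: |u - v| ^ q ≤ (v + u) ^ q
  have step1 : |u - v| ^ q ≤ (v + u) ^ q := by
    apply Real.rpow_le_rpow (abs_nonneg _) _ (by linarith)
    exact abs_le.2 ⟨by linarith, by linarith⟩
  -- Step 2: convexity
  have ha : (0:ℝ) ≤ 1 - θ := by linarith
  have hab : (1 - θ) + θ = 1 := by ring
  have hconv := (convexOn_rpow hq.le).2 (Set.mem_Ici.2 (div_nonneg hv h1θ.le))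
    (Set.mem_Ici.2 (div_nonneg hu hθ0.le)) ha hθ0.le hab
  simp only [smul_eq_mul] at hconv
  have hxy : (1 - θ) * (v / (1 - θ)) + θ * (u / θ) = v + u := by
    field_simp
  rw [hxy] at hconv
  -- Step 3: the v-term
  have bern : 1 - q * θ ≤ (1 - θ) ^ q := by
    have h := one_add_mul_self_le_rpow_one_add (s := -θ) (by linarith) hq.le
    rw [show (1:ℝ) + -θ = 1 - θ from by ring] at h
    linarith
  have hqθ : q * θ = ε / 2 := by
    rw [hθ_def]; field_simp
  have hv_term : (1 - θ) * (v / (1 - θ)) ^ q ≤ (1 + 3 * ε) * v ^ q := by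
    have e : (1 - θ) * (v / (1 - θ)) ^ q = v ^ q * ((1 - θ) * ((1 - θ) ^ q)⁻¹) := by
      rw [Real.div_rpow hv h1θ.le]; ring
    rw [e]
    have h1 : 0 < (1 - θ) ^ q := Real.rpow_pos_of_pos h1θ _
    have key : (1 - θ) * ((1 - θ) ^ q)⁻¹ ≤ 1 + 3 * ε := by
      rw [← div_eq_mul_inv, div_le_iff₀ h1]
      nlinarith [bern, hθ0.le, hε.le, mul_le_mul_of_nonneg_left bern
        (show (0:ℝ) ≤ 1 + 3 * ε by linarith)]
    calc v ^ q * ((1 - θ) * ((1 - θ) ^ q)⁻¹) ≤ v ^ q * (1 + 3 * ε) :=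
          mul_le_mul_of_nonneg_left key (Real.rpow_nonneg hv _)
      _ = (1 + 3 * ε) * v ^ q := by ring
  -- Step 4: the u-term
  have hu_term : θ * (u / θ) ^ q ≤ (2 * q) ^ q * ε ^ (-M) * u ^ q := by
    have e : θ * (u / θ) ^ q = u ^ q * (θ * (θ ^ q)⁻¹) := by
      rw [Real.div_rpow hu hθ0.le]; ring
    rw [e]
    have key : θ * (θ ^ q)⁻¹ ≤ (2 * q) ^ q * ε ^ (-M) := by
      have h1 : θ * (θ ^ q)⁻¹ = θ ^ (1 - q) := by
        rw [Real.rpow_sub hθ0 1 q, Real.rpow_one, div_eq_mul_inv]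
      rw [h1, hθ_def, Real.div_rpow hε.le h2q.le, div_eq_mul_inv,
        ← Real.rpow_neg h2q.le]
      have h2 : ε ^ (1 - q) ≤ ε ^ (-M) := by
        apply Real.rpow_le_rpow_of_exponent_ge hε hε1.le
        linarith
      have h3 : (2 * q) ^ (-(1 - q)) ≤ (2 * q) ^ q :=
        Real.rpow_le_rpow_of_exponent_le (by linarith) (by linarith)
      calc ε ^ (1 - q) * (2 * q) ^ (-(1 - q))
          ≤ ε ^ (-M) * (2 * q) ^ q :=
            mul_le_mul h2 h3 (Real.rpow_nonneg h2q.le _) (Real.rpow_nonneg hε.le _)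
        _ = (2 * q) ^ q * ε ^ (-M) := by ring
    calc u ^ q * (θ * (θ ^ q)⁻¹) ≤ u ^ q * ((2 * q) ^ q * ε ^ (-M)) :=
          mul_le_mul_of_nonneg_left key (Real.rpow_nonneg hu _)
      _ = (2 * q) ^ q * ε ^ (-M) * u ^ q := by ring
  calc |u - v| ^ q ≤ (v + u) ^ q := step1
    _ ≤ (1 - θ) * (v / (1 - θ)) ^ q + θ * (u / θ) ^ q := hconv
    _ ≤ (1 + 3 * ε) * v ^ q + (2 * q) ^ q * ε ^ (-M) * u ^ q := add_le_add hv_term hu_term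
end

section
/- Let p > 3 be a non-integer real and ε ∈ (0,1). For all nonnegative reals a, b satisfying the preliminary bound (a+b)^{⌊p-2⌋} ≤ (1+ε) a^{⌊p-2⌋} + C(p) ε^{-⌊p-3⌋} b^{⌊p-2⌋}, it follows that (a + b)^{p-2} ≤ (1 + 3ε) a^{p-2} + C'(p) ε^{-max{p-3, ⌊p-2⌋/(p-⌊p⌋)}} b^{p-2}, where C'(p) depends only on p. -/
set_option maxHeartbeats 1000000

/-- Young-type splitting: `x^s y^t ≤ δ x^{s+t} + δ^{-s/t} y^{s+t}`. -/
lemma young_split (x y δ s t : ℝ) (hx : 0 ≤ x) (hy : 0 ≤ y) (hδ : 0 < δ)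
    (hs : 0 < s) (ht : 0 < t) :
    x ^ s * y ^ t ≤ δ * x ^ (s + t) + δ ^ (-(s / t)) * y ^ (s + t) := by
  have hst : s + t ≠ 0 := by positivity
  rcases le_or_gt y (δ ^ (1 / t) * x) with h | h
  · have h1 : y ^ t ≤ δ * x ^ t := by
      calc y ^ t ≤ (δ ^ (1 / t) * x) ^ t := Real.rpow_le_rpow hy h ht.le
        _ = δ * x ^ t := by
          rw [Real.mul_rpow (by positivity) hx, ← Real.rpow_mul hδ.le,
            one_div, inv_mul_cancel₀ ht.ne', Real.rpow_one]
    have : x ^ s * y ^ t ≤ δ * x ^ (s + t) := by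
      calc x ^ s * y ^ t ≤ x ^ s * (δ * x ^ t) :=
            mul_le_mul_of_nonneg_left h1 (Real.rpow_nonneg hx s)
        _ = δ * x ^ (s + t) := by rw [Real.rpow_add' hx hst]; ring
    have h2 : 0 ≤ δ ^ (-(s / t)) * y ^ (s + t) := by positivity
    linarith
  · have hx' : x ≤ δ ^ (-(1 / t)) * y := by
      have hδt : 0 < δ ^ (1 / t) := Real.rpow_pos_of_pos hδ _
      rw [Real.rpow_neg hδ.le]
      rw [inv_mul_eq_div, le_div_iff₀ hδt, mul_comm]
      exact h.le
    have h1 : x ^ s ≤ δ ^ (-(s / t)) * y ^ s := by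
      calc x ^ s ≤ (δ ^ (-(1 / t)) * y) ^ s := Real.rpow_le_rpow hx hx' hs.le
        _ = δ ^ (-(s / t)) * y ^ s := by
          rw [Real.mul_rpow (by positivity) hy, ← Real.rpow_mul hδ.le,
            show -(1 / t) * s = -(s / t) by ring]
    have : x ^ s * y ^ t ≤ δ ^ (-(s / t)) * y ^ (s + t) := by
      calc x ^ s * y ^ t ≤ (δ ^ (-(s / t)) * y ^ s) * y ^ t :=
            mul_le_mul_of_nonneg_right h1 (Real.rpow_nonneg hy t)
        _ = δ ^ (-(s / t)) * y ^ (s + t) := by rw [Real.rpow_add' hy hst]; ring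
    have h2 : 0 ≤ δ * x ^ (s + t) := by positivity
    linarith

lemma rpow_subadd (a b θ : ℝ) (ha : 0 ≤ a) (hb : 0 ≤ b) (h0 : 0 ≤ θ) (h1 : θ ≤ 1) :
    (a + b) ^ θ ≤ a ^ θ + b ^ θ := by
  have := NNReal.rpow_add_le_add_rpow ⟨a, ha⟩ ⟨b, hb⟩ h0 h1
  have h2 := NNReal.coe_le_coe.2 this
  push_cast [NNReal.coe_rpow] at h2
  exact h2

/-- Let `p > 3` be a non-integer real. For every constant `C > 0` there is `C' = C'(p) > 0`
such that for every `ε ∈ (0,1)` and all nonnegative reals `a, b` satisfying the preliminary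
bound `(a+b)^{⌊p-2⌋} ≤ (1+ε) a^{⌊p-2⌋} + C ε^{-⌊p-3⌋} b^{⌊p-2⌋}`, one has
`(a+b)^{p-2} ≤ (1+3ε) a^{p-2} + C' ε^{-max{p-3, ⌊p-2⌋/(p-⌊p⌋)}} b^{p-2}`. -/
theorem stmt16 (p : ℝ) (hp : 3 < p) (hpint : ¬ ∃ m : ℤ, p = m) :
    ∀ C : ℝ, 0 < C → ∃ C' : ℝ, 0 < C' ∧ ∀ ε : ℝ, 0 < ε → ε < 1 →
      ∀ a b : ℝ, 0 ≤ a → 0 ≤ b →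
      (a + b) ^ ((⌊p - 2⌋ : ℝ)) ≤
          (1 + ε) * a ^ ((⌊p - 2⌋ : ℝ)) + C * ε ^ (-((⌊p - 3⌋ : ℝ))) * b ^ ((⌊p - 2⌋ : ℝ)) →
      (a + b) ^ (p - 2) ≤
        (1 + 3 * ε) * a ^ (p - 2) +
          C' * ε ^ (-(max (p - 3) ((⌊p - 2⌋ : ℝ) / (p - (⌊p⌋ : ℝ))))) * b ^ (p - 2) := by
  intro C hC
  set k : ℝ := (⌊p - 2⌋ : ℝ) with hk_def
  set θ : ℝ := p - (⌊p⌋ : ℝ) with hθ_def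
  -- basic facts
  have hfloor2 : (⌊p - 2⌋ : ℤ) = ⌊p⌋ - 2 := by
    have : p - 2 = p - ((2 : ℤ) : ℝ) := by push_cast; ring
    rw [this, Int.floor_sub_intCast]
  have hfloor3 : (⌊p - 3⌋ : ℤ) = ⌊p⌋ - 3 := by
    have : p - 3 = p - ((3 : ℤ) : ℝ) := by push_cast; ring
    rw [this, Int.floor_sub_intCast]
  have hk1 : (1 : ℝ) ≤ k := by
    have h : (1 : ℤ) ≤ ⌊p - 2⌋ := Int.le_floor.mpr (by push_cast; linarith)
    simp only [hk_def]
    exact_mod_cast h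
  have hk0 : 0 < k := by linarith
  have hθ0 : 0 < θ := by
    have hle : (⌊p⌋ : ℝ) ≤ p := Int.floor_le p
    have hne : (⌊p⌋ : ℝ) ≠ p := fun h => hpint ⟨⌊p⌋, h.symm⟩
    have := lt_of_le_of_ne hle hne
    simp only [hθ_def]; linarith
  have hθ1 : θ < 1 := by
    have := Int.lt_floor_add_one p
    simp only [hθ_def]; linarith
  have hsum : k + θ = p - 2 := by
    simp only [hk_def, hθ_def]
    rw [hfloor2]; push_cast; ring
  have hk3 : (⌊p - 3⌋ : ℝ) = k - 1 := by
    simp only [hk_def]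
    rw [hfloor3, hfloor2]; push_cast; ring
  have hkM : k - 1 ≤ p - 3 := by
    have := Int.floor_le (p - 3)
    rw [hk3] at this; linarith
  set M : ℝ := max (p - 3) (k / θ) with hM_def
  refine ⟨2 ^ (1 + k / θ) + C ^ (1 + θ / k) + C, by positivity, ?_⟩
  intro ε hε hε1 a b ha hb hyp
  have hab : 0 ≤ a + b := by linarith
  -- ε-power monotonicity: ε^(-x) ≤ ε^(-M) whenever x ≤ M
  have hmono : ∀ x : ℝ, x ≤ M → ε ^ (-x) ≤ ε ^ (-M) := fun x hx =>
    Real.rpow_le_rpow_of_exponent_ge hε hε1.le (by linarith)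
  -- decompose
  have hdec : (a + b) ^ (p - 2) = (a + b) ^ k * (a + b) ^ θ := by
    rw [← Real.rpow_add' hab (by rw [hsum]; intro h; linarith), hsum]
  have hsub : (a + b) ^ θ ≤ a ^ θ + b ^ θ := rpow_subadd a b θ ha hb hθ0.le hθ1.le
  have hyp' : (a + b) ^ k ≤ (1 + ε) * a ^ k + C * ε ^ (-(k - 1)) * b ^ k := by
    have h3 : (⌊p - 3⌋ : ℝ) = k - 1 := hk3
    rw [← h3]; exact hyp
  have hRHS0 : 0 ≤ (1 + ε) * a ^ k + C * ε ^ (-(k - 1)) * b ^ k := by positivity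
  have hstep1 : (a + b) ^ (p - 2) ≤
      ((1 + ε) * a ^ k + C * ε ^ (-(k - 1)) * b ^ k) * (a ^ θ + b ^ θ) := by
    rw [hdec]
    exact mul_le_mul hyp' hsub (Real.rpow_nonneg hab θ) hRHS0
  -- expand
  have hexp : ((1 + ε) * a ^ k + C * ε ^ (-(k - 1)) * b ^ k) * (a ^ θ + b ^ θ) =
      (1 + ε) * a ^ (p - 2) + (1 + ε) * (a ^ k * b ^ θ)
        + C * ε ^ (-(k - 1)) * (a ^ θ * b ^ k) + C * ε ^ (-(k - 1)) * b ^ (p - 2) := by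
    rw [← hsum, Real.rpow_add' ha (by intro h; linarith), Real.rpow_add' hb (by intro h; linarith)]
    ring
  -- cross term 1
  have hyoung1 : a ^ k * b ^ θ ≤ (ε / 2) * a ^ (k + θ) + (ε / 2) ^ (-(k / θ)) * b ^ (k + θ) :=
    young_split a b (ε / 2) k θ ha hb (by linarith) hk0 hθ0
  have hc1 : (ε / 2) ^ (-(k / θ)) ≤ 2 ^ (k / θ) * ε ^ (-M) := by
    have h1 : (ε / 2) ^ (-(k / θ)) = ε ^ (-(k / θ)) * 2 ^ (k / θ) := by
      rw [Real.div_rpow hε.le (by norm_num), Real.rpow_neg (by norm_num : (0:ℝ) ≤ 2)]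
      field_simp
    rw [h1, mul_comm]
    exact mul_le_mul_of_nonneg_left (hmono (k / θ) (le_max_right _ _)) (by positivity)
  have hcross1 : (1 + ε) * (a ^ k * b ^ θ) ≤
      ε * a ^ (p - 2) + 2 ^ (1 + k / θ) * ε ^ (-M) * b ^ (p - 2) := by
    have h2 : (1 + ε) * (a ^ k * b ^ θ) ≤ 2 * (a ^ k * b ^ θ) := by
      have : 0 ≤ a ^ k * b ^ θ := by positivity
      nlinarith
    have h3 : 2 * ((ε / 2) * a ^ (k + θ)) = ε * a ^ (k + θ) := by ring
    have h4 : (2 : ℝ) ^ (1 + k / θ) = 2 * 2 ^ (k / θ) := by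
      rw [Real.rpow_add (by norm_num), Real.rpow_one]
    calc (1 + ε) * (a ^ k * b ^ θ) ≤ 2 * (a ^ k * b ^ θ) := h2
      _ ≤ 2 * ((ε / 2) * a ^ (k + θ) + (ε / 2) ^ (-(k / θ)) * b ^ (k + θ)) := by linarith
      _ ≤ ε * a ^ (k + θ) + 2 * (2 ^ (k / θ) * ε ^ (-M)) * b ^ (k + θ) := by
          have hbk : 0 ≤ b ^ (k + θ) := by positivity
          nlinarith [mul_le_mul_of_nonneg_right hc1 hbk]
      _ = ε * a ^ (p - 2) + 2 ^ (1 + k / θ) * ε ^ (-M) * b ^ (p - 2) := by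
          rw [hsum, h4]; ring
  -- cross term 2, with δ = ε^k / C
  have hδ2 : 0 < ε ^ (k : ℝ) / C := by positivity
  have hyoung2 : a ^ θ * b ^ k ≤
      (ε ^ (k : ℝ) / C) * a ^ (θ + k) + (ε ^ (k : ℝ) / C) ^ (-(θ / k)) * b ^ (θ + k) :=
    young_split a b _ θ k ha hb hδ2 hθ0 hk0
  have hδpow : (ε ^ (k : ℝ) / C) ^ (-(θ / k)) = ε ^ (-θ) * C ^ (θ / k) := by
    rw [Real.div_rpow (by positivity) hC.le, ← Real.rpow_mul hε.le,
      Real.rpow_neg hC.le, div_eq_mul_inv, inv_inv, show k * -(θ / k) = -θ by field_simp]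
  have hsc1 : ε ^ (-(k - 1)) * ε ^ (k : ℝ) = ε := by
    rw [← Real.rpow_add hε, show -(k - 1) + k = 1 by ring, Real.rpow_one]
  have hsc2 : ε ^ (-(k - 1)) * ε ^ (-θ) = ε ^ (-(p - 3)) := by
    rw [← Real.rpow_add hε, show -(k - 1) + -θ = -(p - 3) by linarith]
  have hCpow : C * C ^ (θ / k) = C ^ (1 + θ / k) := by
    rw [Real.rpow_add hC, Real.rpow_one]
  have hcross2 : C * ε ^ (-(k - 1)) * (a ^ θ * b ^ k) ≤
      ε * a ^ (p - 2) + C ^ (1 + θ / k) * ε ^ (-M) * b ^ (p - 2) := by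
    have h0 : 0 ≤ C * ε ^ (-(k - 1)) := by positivity
    have h1 := mul_le_mul_of_nonneg_left hyoung2 h0
    have hA : C * ε ^ (-(k - 1)) * ((ε ^ (k : ℝ) / C) * a ^ (θ + k)) = ε * a ^ (p - 2) := by
      rw [show θ + k = p - 2 by linarith]
      have : C * ε ^ (-(k - 1)) * (ε ^ (k : ℝ) / C)
          = ε ^ (-(k - 1)) * ε ^ (k : ℝ) * (C / C) := by ring
      rw [mul_assoc, ← mul_assoc, ← mul_assoc]
      rw [this, div_self hC.ne', mul_one, hsc1]
    have hB : C * ε ^ (-(k - 1)) * ((ε ^ (k : ℝ) / C) ^ (-(θ / k)) * b ^ (θ + k))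
        = C ^ (1 + θ / k) * ε ^ (-(p - 3)) * b ^ (p - 2) := by
      rw [hδpow, show θ + k = p - 2 by linarith, ← hsc2, ← hCpow]; ring
    have hmono3 : ε ^ (-(p - 3)) ≤ ε ^ (-M) := hmono _ (le_max_left _ _)
    have hb2 : 0 ≤ b ^ (p - 2) := by positivity
    have hC2 : 0 ≤ C ^ (1 + θ / k) := by positivity
    calc C * ε ^ (-(k - 1)) * (a ^ θ * b ^ k)
        ≤ C * ε ^ (-(k - 1)) *
            ((ε ^ (k : ℝ) / C) * a ^ (θ + k) + (ε ^ (k : ℝ) / C) ^ (-(θ / k)) * b ^ (θ + k)) :=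
          h1
      _ = ε * a ^ (p - 2) + C ^ (1 + θ / k) * ε ^ (-(p - 3)) * b ^ (p - 2) := by
          rw [mul_add, hA, hB]
      _ ≤ ε * a ^ (p - 2) + C ^ (1 + θ / k) * ε ^ (-M) * b ^ (p - 2) := by
          have := mul_le_mul_of_nonneg_right
            (mul_le_mul_of_nonneg_left hmono3 hC2) hb2
          linarith
  have hT4 : C * ε ^ (-(k - 1)) * b ^ (p - 2) ≤ C * ε ^ (-M) * b ^ (p - 2) := by
    have hm : ε ^ (-(k - 1)) ≤ ε ^ (-M) := hmono _ (le_trans hkM (le_max_left _ _))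
    have hb2 : 0 ≤ b ^ (p - 2) := by positivity
    have := mul_le_mul_of_nonneg_right (mul_le_mul_of_nonneg_left hm hC.le) hb2
    linarith
  have hfinal : (2 ^ (1 + k / θ) + C ^ (1 + θ / k) + C) * ε ^ (-M) * b ^ (p - 2)
      = 2 ^ (1 + k / θ) * ε ^ (-M) * b ^ (p - 2) + C ^ (1 + θ / k) * ε ^ (-M) * b ^ (p - 2)
        + C * ε ^ (-M) * b ^ (p - 2) := by ring
  rw [hexp] at hstep1
  have hc1' := mul_le_mul_of_nonneg_left hyoung1 (by linarith : (0:ℝ) ≤ 1 + ε)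
  linarith [hstep1, hcross1, hcross2, hT4]
end

section
/- Let p > 2, q ∈ ℝ, and 0 < s < t. Define w_j on ℝⁿ by w_j = j^s + j^t φ on B_6 and w_j = (1 - ψ)(j^s + j^t) on the complement of B_6, where φ, ψ are smooth radial cutoffs with φ = 0 on B_3, φ = 1 outside B_4, ψ = 0 on B_6, ψ = 1 outside B_7, and v_j(x) = j^{-s} w_j(R_j^{-1} x) with R_j = j^{(t-s)(p-1)/(σp)} β^{1/(σp)} for the appropriate positive constant β. Then v_j → 1 in C²_{loc}(ℝⁿ) and (-Δ)^σ_p v_j(x) → -1 for every x ∈ ℝⁿ as j → ∞. -/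
open MeasureTheory Filter Real Metric Topology

set_option maxHeartbeats 4000000


lemma sp_smul {p : ℝ} (hp : 2 < p) (l u : ℝ) (hl : 0 ≤ l) :
    |l * u| ^ (p - 2) * (l * u) = l ^ (p - 1) * (|u| ^ (p - 2) * u) := by
  rcases eq_or_lt_of_le hl with h | h
  · subst h
    simp [Real.zero_rpow (by linarith : p - 2 ≠ 0), Real.zero_rpow (by linarith : p - 1 ≠ 0)]
  · have key : l ^ (p - 2) * l = l ^ (p - 1) := by
      rw [← Real.rpow_add_one h.ne' (p - 2)]; ring_nf
    rw [abs_mul, abs_of_pos h, Real.mul_rpow h.le (abs_nonneg u), ← key]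
    ring
lemma sp_cont {p : ℝ} (hp : 2 < p) : Continuous (fun u : ℝ => |u| ^ (p - 2) * u) :=
  ((continuous_abs).rpow_const (fun _ => Or.inr (by linarith))).mul continuous_id
lemma sp_neg {p : ℝ} (hp : 2 < p) (u : ℝ) (hu : 0 ≤ u) :
    |(-u)| ^ (p - 2) * (-u) = -(u ^ (p - 1)) := by
  rcases eq_or_lt_of_le hu with h | h
  · subst h; simp [Real.zero_rpow (by linarith : p - 1 ≠ 0)]
  · have key : u ^ (p - 2) * u = u ^ (p - 1) := by
      rw [← Real.rpow_add_one h.ne' (p - 2)]; ring_nf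
    rw [abs_neg, abs_of_pos h, ← key]; ring
lemma sp_abs {p : ℝ} (hp : 2 < p) (u : ℝ) : |(|u| ^ (p - 2) * u)| = |u| ^ (p - 1) := by
  rcases eq_or_ne u 0 with h | h
  · simp [h, Real.zero_rpow (by linarith : p - 1 ≠ 0), Real.zero_rpow (by linarith : p - 2 ≠ 0)]
  · have key : |u| ^ (p - 2) * |u| = |u| ^ (p - 1) := by
      rw [← Real.rpow_add_one (abs_ne_zero.2 h) (p - 2)]; ring_nf
    rw [abs_mul, abs_rpow_of_nonneg (abs_nonneg u), abs_abs, key]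

lemma norm_rpow_integrableOn (n : ℕ) {a : ℝ} (ha : (n : ℝ) < a) :
    IntegrableOn (fun z : EuclideanSpace ℝ (Fin n) => ‖z‖ ^ (-a)) {z | 3 ≤ ‖z‖} volume := by
  have hfr : (Module.finrank ℝ (EuclideanSpace ℝ (Fin n)) : ℝ) < a := by
    simpa using ha
  have hint : Integrable (fun z : EuclideanSpace ℝ (Fin n) => (4/3 : ℝ) ^ a * (1 + ‖z‖) ^ (-a)) volume := by
    have := (integrable_one_add_norm (E := EuclideanSpace ℝ (Fin n)) (μ := volume) (r := a) hfr)
    exact this.const_mul _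
  refine Integrable.mono' hint.restrict ?_ ?_
  · apply Measurable.aestronglyMeasurable
    measurability
  · rw [ae_restrict_iff' ((isClosed_le continuous_const continuous_norm).measurableSet)]
    filter_upwards with z hz
    have hz3 : (3:ℝ) ≤ ‖z‖ := hz
    have hz0 : (0:ℝ) < ‖z‖ := by linarith
    have h1 : (0:ℝ) < 1 + ‖z‖ := by linarith
    have h2 : 1 + ‖z‖ ≤ (4/3) * ‖z‖ := by linarith
    have h3 : ((4/3 : ℝ) * ‖z‖) ^ (-a) ≤ (1 + ‖z‖) ^ (-a) :=
      Real.rpow_le_rpow_of_nonpos h1 h2 (by linarith)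
    have h4 : ((4/3 : ℝ) * ‖z‖) ^ (-a) = (4/3 : ℝ) ^ (-a) * ‖z‖ ^ (-a) :=
      Real.mul_rpow (by norm_num) hz0.le
    have h5 : ‖(fun z : EuclideanSpace ℝ (Fin n) => ‖z‖ ^ (-a)) z‖ = ‖z‖ ^ (-a) := by
      simp [abs_of_nonneg (Real.rpow_nonneg (norm_nonneg z) _)]
    rw [h5]
    have h6 : (4/3 : ℝ) ^ a * ((4/3 : ℝ) ^ (-a) * ‖z‖ ^ (-a)) = ‖z‖ ^ (-a) := by
      rw [← mul_assoc, ← Real.rpow_add (by norm_num)]; simp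
    calc ‖z‖ ^ (-a) = (4/3 : ℝ) ^ a * ((4/3:ℝ) ^ (-a) * ‖z‖ ^ (-a)) := h6.symm
    _ = (4/3 : ℝ) ^ a * ((4/3:ℝ) * ‖z‖) ^ (-a) := by rw [h4]
    _ ≤ (4/3 : ℝ) ^ a * (1 + ‖z‖) ^ (-a) := by
        apply mul_le_mul_of_nonneg_left h3 (Real.rpow_nonneg (by norm_num) _)

lemma coeff_integrable (n : ℕ) {a : ℝ} (ha : (n : ℝ) < a)
    (u : EuclideanSpace ℝ (Fin n) → ℝ) (hm : Measurable u) (hb : ∀ z, |u z| ≤ 1)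
    (h0 : ∀ z, ‖z‖ ≤ 3 → u z = 0) :
    Integrable (fun z : EuclideanSpace ℝ (Fin n) => u z * ‖z‖ ^ (-a)) volume := by
  have hS : MeasurableSet {z : EuclideanSpace ℝ (Fin n) | 3 ≤ ‖z‖} :=
    (isClosed_le continuous_const continuous_norm).measurableSet
  have hind : Integrable
      (Set.indicator {z : EuclideanSpace ℝ (Fin n) | 3 ≤ ‖z‖}
        (fun z => ‖z‖ ^ (-a))) volume :=
    (norm_rpow_integrableOn n ha).integrable_indicator hS
  refine Integrable.mono' hind ?_ ?_
  · apply Measurable.aestronglyMeasurable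
    measurability
  · filter_upwards with z
    rw [Set.indicator_apply]
    by_cases hz : 3 ≤ ‖z‖
    · simp only [hz, Set.mem_setOf_eq, if_pos]
      calc ‖u z * ‖z‖ ^ (-a)‖ = |u z| * ‖z‖ ^ (-a) := by
            rw [norm_mul]
            simp [abs_of_nonneg (Real.rpow_nonneg (norm_nonneg z) _)]
      _ ≤ 1 * ‖z‖ ^ (-a) := by
            apply mul_le_mul_of_nonneg_right (hb z) (Real.rpow_nonneg (norm_nonneg z) _)
      _ = ‖z‖ ^ (-a) := one_mul _
    · simp only [Set.mem_setOf_eq, hz, if_neg, not_false_iff]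
      rw [h0 z (by linarith [not_le.mp hz])]
      simp

lemma rpow_const_measurable (e : ℝ) : Measurable fun r : ℝ => r ^ e := by
  measurability

/-- `FracPLapAt n c σ p u x L`: the fractional `p`-Laplacian of `u` at `x` exists, in the
principal-value sense, with value `L`. -/
def FracPLapAt (n : ℕ) (c σ p : ℝ) (u : EuclideanSpace ℝ (Fin n) → ℝ)
    (x : EuclideanSpace ℝ (Fin n)) (L : ℝ) : Prop :=
  Tendsto (fun ε : ℝ =>
      c * ∫ y in {y : EuclideanSpace ℝ (Fin n) | ε < ‖x - y‖},
        |u x - u y| ^ (p - 2) * (u x - u y) / ‖x - y‖ ^ ((n : ℝ) + σ * p))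
    (nhdsWithin 0 (Set.Ioi 0)) (nhds L)

/-- The blow-up example: with smooth radial cutoffs `φ` (`φ = 0` on `B₃`, `φ = 1` off `B₄`)
and `ψ` (`ψ = 0` on `B₆`, `ψ = 1` off `B₇`), `0 ≤ φ, ψ ≤ 1`, set
`w_j = j^s + j^t φ` on `B₆`, `w_j = (1-ψ)(j^s + j^t)` off `B₆`,
`v_j(x) = j^{-s} w_j(R_j^{-1} x)` with `R_j = j^{(t-s)(p-1)/(σp)} β^{1/(σp)}`, where
`β = c(∫_{B₄\B₃} φ^{p-1}|y|^{-(n+σp)} + ∫_{B₆\B₄} |y|^{-(n+σp)} + ∫_{B₆ᶜ}(1-ψ)^{p-1}|y|^{-(n+σp)})`.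
Then `v_j → 1` in `C²_loc(ℝⁿ)` and `(-Δ)^σ_p v_j(x) → -1` for every `x`. -/
theorem stmt19 (n : ℕ) (hn : 1 ≤ n) (σ p c q s t : ℝ) (hσ0 : 0 < σ) (hσ1 : σ < 1)
    (hp : 2 < p) (hc : 0 < c) (hs : 0 < s) (hst : s < t)
    (φ ψ : EuclideanSpace ℝ (Fin n) → ℝ)
    (hφsm : ContDiff ℝ (⊤ : ℕ∞) φ) (hψsm : ContDiff ℝ (⊤ : ℕ∞) ψ)
    (hφ01 : ∀ x, 0 ≤ φ x ∧ φ x ≤ 1) (hψ01 : ∀ x, 0 ≤ ψ x ∧ ψ x ≤ 1)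
    (hφrad : ∀ x y : EuclideanSpace ℝ (Fin n), ‖x‖ = ‖y‖ → φ x = φ y)
    (hψrad : ∀ x y : EuclideanSpace ℝ (Fin n), ‖x‖ = ‖y‖ → ψ x = ψ y)
    (hφ0 : ∀ x : EuclideanSpace ℝ (Fin n), ‖x‖ ≤ 3 → φ x = 0)
    (hφ1 : ∀ x : EuclideanSpace ℝ (Fin n), 4 ≤ ‖x‖ → φ x = 1)
    (hψ0 : ∀ x : EuclideanSpace ℝ (Fin n), ‖x‖ ≤ 6 → ψ x = 0)
    (hψ1 : ∀ x : EuclideanSpace ℝ (Fin n), 7 ≤ ‖x‖ → ψ x = 1)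
    (β : ℝ)
    (hβ : β = c * ((∫ y in Metric.ball (0 : EuclideanSpace ℝ (Fin n)) 4 \
            Metric.ball (0 : EuclideanSpace ℝ (Fin n)) 3,
            φ y ^ (p - 1) * ‖y‖ ^ (-((n : ℝ) + σ * p))) +
        (∫ y in Metric.ball (0 : EuclideanSpace ℝ (Fin n)) 6 \
            Metric.ball (0 : EuclideanSpace ℝ (Fin n)) 4,
            ‖y‖ ^ (-((n : ℝ) + σ * p))) +
        ∫ y in (Metric.ball (0 : EuclideanSpace ℝ (Fin n)) 6)ᶜ,
            (1 - ψ y) ^ (p - 1) * ‖y‖ ^ (-((n : ℝ) + σ * p))))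
    (w : ℕ → EuclideanSpace ℝ (Fin n) → ℝ)
    (hw : ∀ j : ℕ, ∀ x : EuclideanSpace ℝ (Fin n),
      w j x = if ‖x‖ < 6 then (j : ℝ) ^ s + (j : ℝ) ^ t * φ x
              else (1 - ψ x) * ((j : ℝ) ^ s + (j : ℝ) ^ t))
    (R : ℕ → ℝ)
    (hR : ∀ j : ℕ, R j = (j : ℝ) ^ ((t - s) * (p - 1) / (σ * p)) * β ^ (1 / (σ * p)))
    (v : ℕ → EuclideanSpace ℝ (Fin n) → ℝ)
    (hv : ∀ j : ℕ, ∀ x : EuclideanSpace ℝ (Fin n),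
      v j x = (j : ℝ) ^ (-s) * w j ((R j)⁻¹ • x)) :
    (∀ ρ > (0 : ℝ),
      Tendsto (fun j =>
          ⨆ x ∈ Metric.ball (0 : EuclideanSpace ℝ (Fin n)) ρ,
            ∑ k ∈ Finset.range 3,
              ‖iteratedFDeriv ℝ k (fun z => v j z - 1) x‖)
        atTop (nhds 0)) ∧
    ∀ x : EuclideanSpace ℝ (Fin n), ∀ L : ℕ → ℝ,
      (∀ j, FracPLapAt n c σ p (v j) x (L j)) →
      Tendsto L atTop (nhds (-1)) := by
  classical
  have hp1 : (0:ℝ) < p - 1 := by linarith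
  have hp2 : (0:ℝ) < p - 2 := by linarith
  have hp1' : p - 1 ≠ 0 := ne_of_gt hp1
  have hσp : 0 < σ * p := by nlinarith
  have hτ : 0 < t - s := by linarith
  have ha_n : (n:ℝ) < (n:ℝ) + σ * p := by linarith
  have ha_pos : (0:ℝ) < (n:ℝ) + σ * p := by
    have : (0:ℝ) ≤ (n:ℝ) := Nat.cast_nonneg n
    linarith
  -- positivity of β
  have hT1 : 0 ≤ ∫ y in Metric.ball (0 : EuclideanSpace ℝ (Fin n)) 4 \
      Metric.ball (0 : EuclideanSpace ℝ (Fin n)) 3,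
      φ y ^ (p - 1) * ‖y‖ ^ (-((n : ℝ) + σ * p)) :=
    setIntegral_nonneg (measurableSet_ball.diff measurableSet_ball) fun y _ =>
      mul_nonneg (Real.rpow_nonneg (hφ01 y).1 _) (Real.rpow_nonneg (norm_nonneg _) _)
  have hT3 : 0 ≤ ∫ y in (Metric.ball (0 : EuclideanSpace ℝ (Fin n)) 6)ᶜ,
      (1 - ψ y) ^ (p - 1) * ‖y‖ ^ (-((n : ℝ) + σ * p)) :=
    setIntegral_nonneg measurableSet_ball.compl fun y _ =>
      mul_nonneg (Real.rpow_nonneg (by linarith [(hψ01 y).2]) _)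
        (Real.rpow_nonneg (norm_nonneg _) _)
  have hT2 : 0 < ∫ y in Metric.ball (0 : EuclideanSpace ℝ (Fin n)) 6 \
      Metric.ball (0 : EuclideanSpace ℝ (Fin n)) 4, ‖y‖ ^ (-((n : ℝ) + σ * p)) := by
    have hSm : MeasurableSet (Metric.ball (0 : EuclideanSpace ℝ (Fin n)) 6 \ Metric.ball 0 4) :=
      measurableSet_ball.diff measurableSet_ball
    have hsub : (Metric.ball (0 : EuclideanSpace ℝ (Fin n)) 6 \ Metric.ball 0 4) ⊆
        {z | 3 ≤ ‖z‖} := by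
      rintro z ⟨_, hz4⟩
      have h4 : ¬ ‖z‖ < 4 := by simpa [mem_ball_zero_iff] using hz4
      have : (4:ℝ) ≤ ‖z‖ := not_lt.1 h4
      simp only [Set.mem_setOf_eq]; linarith
    have hInt : IntegrableOn (fun y : EuclideanSpace ℝ (Fin n) => ‖y‖ ^ (-((n : ℝ) + σ * p)))
        (Metric.ball 0 6 \ Metric.ball 0 4) volume :=
      (norm_rpow_integrableOn n ha_n).mono_set hsub
    have hμfin : volume (Metric.ball (0 : EuclideanSpace ℝ (Fin n)) 6 \ Metric.ball 0 4) ≠ ⊤ :=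
      ((measure_mono Set.diff_subset).trans_lt measure_ball_lt_top).ne
    have hμpos : 0 < volume (Metric.ball (0 : EuclideanSpace ℝ (Fin n)) 6 \ Metric.ball 0 4) := by
      have i0 : Fin n := ⟨0, hn⟩
      set z0 : EuclideanSpace ℝ (Fin n) := (5:ℝ) • EuclideanSpace.single i0 (1:ℝ) with hz0_def
      have hz0 : ‖z0‖ = 5 := by
        rw [hz0_def, norm_smul, EuclideanSpace.norm_single]; norm_num
      have hball : Metric.ball z0 1 ⊆ Metric.ball 0 6 \ Metric.ball 0 4 := by
        intro y hy
        have hd : ‖y - z0‖ < 1 := by rwa [Metric.mem_ball, dist_eq_norm] at hy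
        have htri : ‖y‖ ≤ ‖y - z0‖ + ‖z0‖ := by
          calc ‖y‖ = ‖(y - z0) + z0‖ := by rw [sub_add_cancel]
          _ ≤ ‖y - z0‖ + ‖z0‖ := norm_add_le _ _
        have htri2 : ‖z0‖ - ‖y‖ ≤ ‖y - z0‖ := by
          have := norm_sub_norm_le z0 y
          rwa [norm_sub_rev] at this
        constructor
        · rw [mem_ball_zero_iff]; linarith
        · intro hmem
          rw [mem_ball_zero_iff] at hmem; linarith
      exact lt_of_lt_of_le (measure_ball_pos volume z0 one_pos) (measure_mono hball)
    have hconst : ∀ y ∈ Metric.ball (0 : EuclideanSpace ℝ (Fin n)) 6 \ Metric.ball 0 4,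
        (6:ℝ) ^ (-((n : ℝ) + σ * p)) ≤ ‖y‖ ^ (-((n : ℝ) + σ * p)) := by
      intro y hy
      have h6 : ‖y‖ < 6 := mem_ball_zero_iff.1 hy.1
      have h0 : (0:ℝ) < ‖y‖ := by
        have := hsub hy; simp only [Set.mem_setOf_eq] at this; linarith
      exact Real.rpow_le_rpow_of_nonpos h0 h6.le (by linarith)
    have hineq := setIntegral_ge_of_const_le hSm hμfin hconst hInt
    have hpos : 0 < (6:ℝ) ^ (-((n : ℝ) + σ * p)) *
        (volume (Metric.ball (0 : EuclideanSpace ℝ (Fin n)) 6 \ Metric.ball 0 4)).toReal :=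
      mul_pos (Real.rpow_pos_of_pos (by norm_num) _) (ENNReal.toReal_pos hμpos.ne' hμfin)
    exact lt_of_lt_of_le (by rw [smul_eq_mul, mul_comm]; exact hpos) hineq
  have hβpos : 0 < β := by rw [hβ]; apply mul_pos hc; linarith
  have hβr : 0 < β ^ (1/(σ*p)) := Real.rpow_pos_of_pos hβpos _
  have hRpos : ∀ j : ℕ, 1 ≤ j → 0 < R j := by
    intro j hj
    have hjR : (0:ℝ) < (j:ℝ) := by exact_mod_cast hj
    rw [hR]
    exact mul_pos (Real.rpow_pos_of_pos hjR _) hβr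
  have hRtend : Tendsto R atTop atTop := by
    have h1 : Tendsto (fun j : ℕ => ((j:ℝ)) ^ ((t-s)*(p-1)/(σ*p))) atTop atTop :=
      (tendsto_rpow_atTop (by positivity)).comp tendsto_natCast_atTop_atTop
    exact (h1.atTop_mul_const hβr).congr fun j => (hR j).symm
  have hv1 : ∀ j : ℕ, 1 ≤ j → ∀ z : EuclideanSpace ℝ (Fin n), ‖z‖ < 3 * R j → v j z = 1 := by
    intro j hj z hz
    have hjR : (0:ℝ) < (j:ℝ) := by exact_mod_cast hj
    have hR0 := hRpos j hj
    have hn3 : ‖(R j)⁻¹ • z‖ ≤ 3 := by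
      rw [norm_smul, norm_inv, Real.norm_eq_abs, abs_of_pos hR0]
      have h1 : (R j)⁻¹ * ‖z‖ ≤ (R j)⁻¹ * (3 * R j) :=
        mul_le_mul_of_nonneg_left hz.le (inv_nonneg.2 hR0.le)
      have h2 : (R j)⁻¹ * (3 * R j) = 3 := by field_simp
      linarith
    rw [hv, hw, if_pos (lt_of_le_of_lt hn3 (by norm_num)), hφ0 _ hn3]
    rw [mul_zero, add_zero, ← Real.rpow_add hjR]
    simp
  constructor
  · -- Part 1
    intro ρ hρ
    apply Tendsto.congr' ?_ (tendsto_const_nhds (x := (0:ℝ)))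
    filter_upwards [eventually_ge_atTop 1, hRtend.eventually_gt_atTop ρ] with j hj hρj
    have hρ3 : ρ < 3 * R j := by
      have := hRpos j hj
      linarith
    have hsum : ∀ x' ∈ Metric.ball (0 : EuclideanSpace ℝ (Fin n)) ρ,
        (∑ k ∈ Finset.range 3, ‖iteratedFDeriv ℝ k (fun z => v j z - 1) x'‖) = 0 := by
      intro x' hx'
      have hx'ρ : ‖x'‖ < ρ := mem_ball_zero_iff.1 hx'
      have hopen : Metric.ball (0 : EuclideanSpace ℝ (Fin n)) (3 * R j) ∈ 𝓝 x' :=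
        Metric.isOpen_ball.mem_nhds (mem_ball_zero_iff.2 (by linarith))
      have hev : (fun z => v j z - 1) =ᶠ[𝓝 x'] (fun _ => (0:ℝ)) :=
        Filter.eventually_of_mem hopen fun z hz => by
          have := hv1 j hj z (mem_ball_zero_iff.1 hz); simp [this]
      apply Finset.sum_eq_zero
      intro k _
      have heq : iteratedFDeriv ℝ k (fun z => v j z - 1) x'
          = iteratedFDeriv ℝ k (fun _ => (0:ℝ)) x' := by
        rw [← iteratedFDerivWithin_univ, ← iteratedFDerivWithin_univ (f := fun _ => (0:ℝ))]
        apply Filter.EventuallyEq.iteratedFDerivWithin_eq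
        · rwa [nhdsWithin_univ]
        · rw [hv1 j hj x' (by linarith)]; ring
      rw [heq, iteratedFDeriv_zero_fun]
      simp
    symm
    have h1 : ∀ x' : EuclideanSpace ℝ (Fin n),
        (⨆ _ : x' ∈ Metric.ball (0 : EuclideanSpace ℝ (Fin n)) ρ,
          ∑ k ∈ Finset.range 3, ‖iteratedFDeriv ℝ k (fun z => v j z - 1) x'‖) = 0 := by
      intro x'
      by_cases hx' : x' ∈ Metric.ball (0 : EuclideanSpace ℝ (Fin n)) ρ
      · rw [ciSup_pos hx']; exact hsum x' hx'
      · rw [ciSup_neg hx', Real.sSup_empty]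
    simp only [h1]
    exact ciSup_const
  · -- Part 2
    intro x L hL
    set xj : ℕ → EuclideanSpace ℝ (Fin n) := fun j => (R j)⁻¹ • x with hxj_def
    set q : ℕ → EuclideanSpace ℝ (Fin n) → ℝ :=
      fun j z => (j:ℝ) ^ (-(t-s)) * (1 - (j:ℝ) ^ (-s) * w j z) with hq_def
    set h : ℕ → EuclideanSpace ℝ (Fin n) → ℝ :=
      fun j z => (|q j z| ^ (p - 2) * q j z) * ‖xj j - z‖ ^ (-((n:ℝ) + σ * p)) with hh_def
    set G : EuclideanSpace ℝ (Fin n) → ℝ :=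
      fun z => -((if ‖z‖ < 6 then φ z else 1 - ψ z) ^ (p - 1) * ‖z‖ ^ (-((n:ℝ) + σ * p)))
      with hG_def
    set F : ℕ → EuclideanSpace ℝ (Fin n) → ℝ :=
      fun j y => |v j x - v j y| ^ (p - 2) * (v j x - v j y) / ‖x - y‖ ^ ((n : ℝ) + σ * p)
      with hF_def
    set A : ℕ → ℝ := fun j => c * ∫ y, F j y with hA_def
    -- basic computations about q
    have hq_lt : ∀ j : ℕ, 1 ≤ j → ∀ z : EuclideanSpace ℝ (Fin n), ‖z‖ < 6 →
        q j z = -φ z := by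
      intro j hj z hz
      have hjR : (0:ℝ) < (j:ℝ) := by exact_mod_cast hj
      have e1 : (j:ℝ)^(-s) * (j:ℝ)^s = 1 := by rw [← Real.rpow_add hjR]; simp
      have e2 : (j:ℝ)^(-s) * (j:ℝ)^t = (j:ℝ)^(t-s) := by
        rw [← Real.rpow_add hjR]; congr 1; ring
      have e3 : (j:ℝ)^(-(t-s)) * (j:ℝ)^(t-s) = 1 := by rw [← Real.rpow_add hjR]; simp
      simp only [hq_def]
      rw [hw j z, if_pos hz]
      have expand : (j:ℝ)^(-s) * ((j:ℝ)^s + (j:ℝ)^t * φ z) = 1 + (j:ℝ)^(t-s) * φ z := by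
        rw [mul_add, e1, ← mul_assoc, e2]
      rw [expand, show (1:ℝ) - (1 + (j:ℝ)^(t-s) * φ z) = -((j:ℝ)^(t-s) * φ z) by ring,
        show (j:ℝ)^(-(t-s)) * -((j:ℝ)^(t-s) * φ z)
          = -(((j:ℝ)^(-(t-s)) * (j:ℝ)^(t-s)) * φ z) by ring, e3, one_mul]
    have hq_ge : ∀ j : ℕ, 1 ≤ j → ∀ z : EuclideanSpace ℝ (Fin n), ¬ (‖z‖ < 6) →
        q j z = (j:ℝ)^(-(t-s)) - (1 - ψ z) * ((j:ℝ)^(-(t-s)) + 1) := by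
      intro j hj z hz
      have hjR : (0:ℝ) < (j:ℝ) := by exact_mod_cast hj
      have e1 : (j:ℝ)^(-s) * (j:ℝ)^s = 1 := by rw [← Real.rpow_add hjR]; simp
      have e2 : (j:ℝ)^(-s) * (j:ℝ)^t = (j:ℝ)^(t-s) := by
        rw [← Real.rpow_add hjR]; congr 1; ring
      have e3 : (j:ℝ)^(-(t-s)) * (j:ℝ)^(t-s) = 1 := by rw [← Real.rpow_add hjR]; simp
      simp only [hq_def]
      rw [hw j z, if_neg hz]
      have expand : (j:ℝ)^(-s) * ((1 - ψ z) * ((j:ℝ)^s + (j:ℝ)^t))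
          = (1 - ψ z) * (1 + (j:ℝ)^(t-s)) := by
        rw [show (j:ℝ)^(-s) * ((1 - ψ z) * ((j:ℝ)^s + (j:ℝ)^t))
          = (1 - ψ z) * ((j:ℝ)^(-s) * (j:ℝ)^s + (j:ℝ)^(-s) * (j:ℝ)^t) by ring, e1, e2]
      rw [expand]
      linear_combination (-(1 - ψ z)) * e3
    have hq_bdd : ∀ j : ℕ, 1 ≤ j → ∀ z : EuclideanSpace ℝ (Fin n), |q j z| ≤ 3 := by
      intro j hj z
      have hjR : (1:ℝ) ≤ (j:ℝ) := by exact_mod_cast hj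
      by_cases hz : ‖z‖ < 6
      · rw [hq_lt j hj z hz, abs_neg, abs_of_nonneg (hφ01 z).1]
        linarith [(hφ01 z).2]
      · rw [hq_ge j hj z hz]
        have hu0 : (0:ℝ) ≤ (j:ℝ)^(-(t-s)) := Real.rpow_nonneg (by linarith) _
        have hu1 : (j:ℝ)^(-(t-s)) ≤ 1 :=
          Real.rpow_le_one_of_one_le_of_nonpos hjR (by linarith)
        have hψ1 := (hψ01 z).1
        have hψ2 := (hψ01 z).2
        rw [abs_le]
        constructor <;> nlinarith
    -- measurability
    have hw_meas : ∀ j : ℕ, Measurable (w j) := by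
      intro j
      rw [show w j = fun z => if ‖z‖ < 6 then (j:ℝ)^s + (j:ℝ)^t * φ z
          else (1 - ψ z) * ((j:ℝ)^s + (j:ℝ)^t) from funext (hw j)]
      exact Measurable.ite (measurableSet_lt measurable_norm measurable_const)
        (measurable_const.add (measurable_const.mul hφsm.continuous.measurable))
        ((measurable_const.sub hψsm.continuous.measurable).mul measurable_const)
    have h_meas : ∀ j : ℕ, Measurable (h j) := by
      intro j
      simp only [hh_def, hq_def]
      apply Measurable.mul
      · exact (sp_cont hp).measurable.comp
          (measurable_const.mul (measurable_const.sub (measurable_const.mul (hw_meas j))))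
      · have m1 : Measurable fun z : EuclideanSpace ℝ (Fin n) => ‖xj j - z‖ :=
          (continuous_const.sub continuous_id).norm.measurable
        exact (rpow_const_measurable (-((n:ℝ) + σ * p))).comp m1
    -- xj facts
    have hxj_tend : Tendsto xj atTop (𝓝 0) := by
      have h0 := (hRtend.inv_tendsto_atTop).smul_const x
      rw [zero_smul] at h0
      exact h0
    have hxj_small : ∀ᶠ j : ℕ in atTop, ‖xj j‖ ≤ 1 := by
      filter_upwards [hRtend.eventually_ge_atTop (max 1 ‖x‖), eventually_ge_atTop 1]
        with j hj h1
      have hR0 := hRpos j h1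
      simp only [hxj_def]
      rw [norm_smul, norm_inv, Real.norm_eq_abs, abs_of_pos hR0]
      have hxR : ‖x‖ ≤ R j := le_trans (le_max_right _ _) hj
      calc (R j)⁻¹ * ‖x‖ ≤ (R j)⁻¹ * R j :=
            mul_le_mul_of_nonneg_left hxR (inv_nonneg.2 hR0.le)
      _ = 1 := inv_mul_cancel₀ hR0.ne'
    -- change of variables
    have hAeq : ∀ j : ℕ, 1 ≤ j → ‖x‖ < 3 * R j → A j = (c / β) * ∫ z, h j z := by
      intro j hj hx3
      have hjR : (0:ℝ) < (j:ℝ) := by exact_mod_cast hj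
      have hR0 := hRpos j hj
      have hσp0 : σ * p ≠ 0 := ne_of_gt hσp
      have hvx : v j x = 1 := hv1 j hj x hx3
      have hfr : Module.finrank ℝ (EuclideanSpace ℝ (Fin n)) = n := finrank_euclideanSpace_fin
      have hcv := MeasureTheory.Measure.integral_comp_smul
        (volume : Measure (EuclideanSpace ℝ (Fin n))) (F j) (R j)
      rw [hfr] at hcv
      have habs : |((R j : ℝ) ^ n)⁻¹| = ((R j) ^ n)⁻¹ := abs_of_pos (by positivity)
      rw [habs, smul_eq_mul] at hcv
      have hpt : ∀ z : EuclideanSpace ℝ (Fin n), F j (R j • z)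
          = (R j) ^ (-((n:ℝ) + σ * p)) * ((j:ℝ) ^ ((t-s)*(p-1)) * h j z) := by
        intro z
        have hinv : (R j)⁻¹ • (R j • z) = z := inv_smul_smul₀ hR0.ne' z
        have hxsub : x - R j • z = R j • (xj j - z) := by
          simp only [hxj_def]
          rw [smul_sub, smul_inv_smul₀ hR0.ne']
        have hnorm : ‖x - R j • z‖ = R j * ‖xj j - z‖ := by
          rw [hxsub, norm_smul, Real.norm_eq_abs, abs_of_pos hR0]
        have hden : ‖x - R j • z‖ ^ ((n:ℝ) + σ * p)
            = (R j) ^ ((n:ℝ) + σ * p) * ‖xj j - z‖ ^ ((n:ℝ) + σ * p) := by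
          rw [hnorm, Real.mul_rpow hR0.le (norm_nonneg _)]
        have hvRz : v j x - v j (R j • z) = 1 - (j:ℝ) ^ (-s) * w j z := by
          rw [hvx, hv, hinv]
        have hsp : |1 - (j:ℝ)^(-s) * w j z| ^ (p - 2) * (1 - (j:ℝ)^(-s) * w j z)
            = (j:ℝ) ^ ((t-s)*(p-1)) * (|q j z| ^ (p - 2) * q j z) := by
          have h1 : ((j:ℝ) ^ (-(t-s))) ^ (p-1) = (j:ℝ) ^ (-(t-s)*(p-1)) :=
            (Real.rpow_mul hjR.le _ _).symm
          have h2 : (j:ℝ) ^ ((t-s)*(p-1)) * (j:ℝ) ^ (-(t-s)*(p-1)) = 1 := by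
            rw [← Real.rpow_add hjR, show (t-s)*(p-1) + -(t-s)*(p-1) = 0 by ring,
              Real.rpow_zero]
          calc |1 - (j:ℝ)^(-s) * w j z| ^ (p - 2) * (1 - (j:ℝ)^(-s) * w j z)
              = ((j:ℝ)^((t-s)*(p-1)) * (j:ℝ)^(-(t-s)*(p-1))) *
                (|1 - (j:ℝ)^(-s) * w j z| ^ (p - 2) * (1 - (j:ℝ)^(-s) * w j z)) := by
                rw [h2, one_mul]
          _ = (j:ℝ)^((t-s)*(p-1)) * (|q j z| ^ (p - 2) * q j z) := by
                simp only [hq_def]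
                rw [sp_smul hp _ _ (Real.rpow_nonneg hjR.le (-(t-s))), h1]
                ring
        simp only [hF_def, hh_def]
        rw [hvRz, hden, hsp]
        rw [Real.rpow_neg hR0.le, Real.rpow_neg (norm_nonneg (xj j - z))]
        rw [div_eq_mul_inv, mul_inv]
        ring
      have hint2 : ∫ z, F j (R j • z)
          = (R j) ^ (-((n:ℝ) + σ * p)) * ((j:ℝ) ^ ((t-s)*(p-1)) * ∫ z, h j z) := by
        rw [integral_congr_ae (Filter.Eventually.of_forall hpt), integral_const_mul,
          integral_const_mul]
      rw [hint2] at hcv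
      have hIF : ∫ y, F j y = (R j) ^ n *
          ((R j) ^ (-((n:ℝ)+σ*p)) * ((j:ℝ)^((t-s)*(p-1)) * ∫ z, h j z)) := by
        rw [hcv, ← mul_assoc, mul_inv_cancel₀ (by positivity : ((R j:ℝ)^n) ≠ 0), one_mul]
      have hconst : c * ((R j) ^ n * ((R j) ^ (-((n:ℝ)+σ*p)) * ((j:ℝ)^((t-s)*(p-1)))))
          = c / β := by
        have hRn : (R j : ℝ) ^ n = (R j) ^ ((n:ℝ)) := (Real.rpow_natCast _ n).symm
        have hRa : (R j) ^ ((n:ℝ)) * (R j) ^ (-((n:ℝ)+σ*p)) = (R j) ^ (-(σ*p)) := by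
          rw [← Real.rpow_add hR0]; congr 1; ring
        have hRσ : (R j) ^ (-(σ*p)) = (j:ℝ) ^ (-((t-s)*(p-1))) * β⁻¹ := by
          rw [hR]
          rw [Real.mul_rpow (Real.rpow_nonneg hjR.le _) (Real.rpow_nonneg hβpos.le _)]
          rw [← Real.rpow_mul hjR.le, ← Real.rpow_mul hβpos.le]
          congr 1
          · congr 1; field_simp
          · rw [show 1/(σ*p) * -(σ*p) = -1 by field_simp, Real.rpow_neg_one]
        have hjj : (j:ℝ) ^ (-((t-s)*(p-1))) * (j:ℝ)^((t-s)*(p-1)) = 1 := by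
          rw [← Real.rpow_add hjR]; simp
        calc c * ((R j) ^ n * ((R j) ^ (-((n:ℝ)+σ*p)) * ((j:ℝ)^((t-s)*(p-1)))))
            = c * (((R j) ^ ((n:ℝ)) * (R j) ^ (-((n:ℝ)+σ*p))) * ((j:ℝ)^((t-s)*(p-1)))) := by
              rw [hRn]; ring
        _ = c * ((R j) ^ (-(σ*p)) * (j:ℝ)^((t-s)*(p-1))) := by rw [hRa]
        _ = c * (((j:ℝ) ^ (-((t-s)*(p-1))) * β⁻¹) * (j:ℝ)^((t-s)*(p-1))) := by rw [hRσ]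
        _ = c * β⁻¹ * ((j:ℝ) ^ (-((t-s)*(p-1))) * (j:ℝ)^((t-s)*(p-1))) := by ring
        _ = c / β := by rw [hjj, mul_one, div_eq_mul_inv]
      simp only [hA_def]
      rw [hIF]
      calc c * ((R j)^n * ((R j)^(-((n:ℝ)+σ*p)) * ((j:ℝ)^((t-s)*(p-1)) * ∫ z, h j z)))
          = (c * ((R j)^n * ((R j)^(-((n:ℝ)+σ*p)) * (j:ℝ)^((t-s)*(p-1))))) * ∫ z, h j z := by
            ring
      _ = (c/β) * ∫ z, h j z := by rw [hconst]

    -- dominated convergence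
    have hDCT : Tendsto (fun j => ∫ z, h j z) atTop (𝓝 (∫ z, G z)) := by
      have hS : MeasurableSet {z : EuclideanSpace ℝ (Fin n) | 3 ≤ ‖z‖} :=
        (isClosed_le continuous_const continuous_norm).measurableSet
      apply tendsto_integral_filter_of_dominated_convergence
        (bound := fun z : EuclideanSpace ℝ (Fin n) =>
          if 3 ≤ ‖z‖ then (3:ℝ)^(p-1) * ((2/3:ℝ)^(-((n:ℝ)+σ*p)) * ‖z‖^(-((n:ℝ)+σ*p))) else 0)
      · exact Filter.Eventually.of_forall fun j => (h_meas j).aestronglyMeasurable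
      · filter_upwards [eventually_ge_atTop 1, hxj_small] with j hj hxj1
        apply Filter.Eventually.of_forall
        intro z
        by_cases hz : 3 ≤ ‖z‖
        · rw [if_pos hz]
          have hzpos : (0:ℝ) < ‖z‖ := by linarith
          have hsp : |(|q j z| ^ (p-2) * q j z)| ≤ 3 ^ (p-1) := by
            rw [sp_abs hp]
            exact Real.rpow_le_rpow (abs_nonneg _) (hq_bdd j hj z) (by linarith)
          have hd : (2/3 : ℝ) * ‖z‖ ≤ ‖xj j - z‖ := by
            have h1 : ‖z‖ - ‖xj j‖ ≤ ‖xj j - z‖ := by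
              have h2 := norm_sub_norm_le z (xj j)
              rwa [norm_sub_rev] at h2
            linarith
          have hdr : ‖xj j - z‖ ^ (-((n:ℝ)+σ*p))
              ≤ (2/3:ℝ)^(-((n:ℝ)+σ*p)) * ‖z‖^(-((n:ℝ)+σ*p)) := by
            have h3 := Real.rpow_le_rpow_of_nonpos
              (by positivity : (0:ℝ) < (2/3) * ‖z‖) hd (by linarith : -((n:ℝ)+σ*p) ≤ 0)
            rwa [Real.mul_rpow (by norm_num) hzpos.le] at h3
          have hnn1 : (0:ℝ) ≤ ‖xj j - z‖ ^ (-((n:ℝ)+σ*p)) :=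
            Real.rpow_nonneg (norm_nonneg _) _
          calc ‖h j z‖ = |(|q j z| ^ (p-2) * q j z)| * ‖xj j - z‖ ^ (-((n:ℝ)+σ*p)) := by
                simp only [hh_def]
                rw [Real.norm_eq_abs, abs_mul, abs_of_nonneg hnn1]
          _ ≤ 3^(p-1) * ((2/3:ℝ)^(-((n:ℝ)+σ*p)) * ‖z‖^(-((n:ℝ)+σ*p))) :=
            mul_le_mul hsp hdr hnn1 (Real.rpow_nonneg (by norm_num) _)
        · rw [if_neg hz]
          have hz3 : ‖z‖ ≤ 3 := by linarith [not_le.1 hz]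
          have hq0 : q j z = 0 := by
            rw [hq_lt j hj z (by linarith), hφ0 z hz3, neg_zero]
          simp [hh_def, hq0]
      · have h1 : IntegrableOn (fun z : EuclideanSpace ℝ (Fin n) =>
            (3:ℝ)^(p-1) * ((2/3:ℝ)^(-((n:ℝ)+σ*p)) * ‖z‖^(-((n:ℝ)+σ*p))))
            {z | 3 ≤ ‖z‖} volume :=
          ((norm_rpow_integrableOn n ha_n).const_mul _).const_mul _
        apply (h1.integrable_indicator hS).congr
        apply Filter.Eventually.of_forall
        intro z
        rw [Set.indicator_apply]
        simp only [Set.mem_setOf_eq]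
      · apply Filter.Eventually.of_forall
        intro z
        rcases le_or_gt ‖z‖ 3 with hz | hz
        · have hG0 : G z = 0 := by
            simp only [hG_def]
            rw [if_pos (by linarith : ‖z‖ < 6), hφ0 z hz, Real.zero_rpow hp1',
              zero_mul, neg_zero]
          rw [hG0]
          apply Tendsto.congr' ?_ (tendsto_const_nhds (x := (0:ℝ)))
          filter_upwards [eventually_ge_atTop 1] with j hj
          have hq0 : q j z = 0 := by
            rw [hq_lt j hj z (by linarith), hφ0 z hz, neg_zero]
          simp [hh_def, hq0]
        · have hzpos : (0:ℝ) < ‖z‖ := by linarith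
          have hnt : Tendsto (fun j => ‖xj j - z‖ ^ (-((n:ℝ)+σ*p))) atTop
              (𝓝 (‖z‖ ^ (-((n:ℝ)+σ*p)))) := by
            have hzne : ‖(0:EuclideanSpace ℝ (Fin n)) - z‖ ≠ 0 := by
              rw [zero_sub, norm_neg]; exact ne_of_gt hzpos
            have hcont : ContinuousAt
                (fun w : EuclideanSpace ℝ (Fin n) => ‖w - z‖ ^ (-((n:ℝ)+σ*p))) 0 :=
              ContinuousAt.rpow_const
                ((continuous_norm.comp (continuous_id.sub continuous_const)).continuousAt)
                (Or.inl hzne)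
            have h5 := hcont.tendsto.comp hxj_tend
            simp only [Function.comp_def] at h5
            rw [zero_sub, norm_neg] at h5
            exact h5
          by_cases h6 : ‖z‖ < 6
          · have hlim : Tendsto (fun j => (-(φ z ^ (p-1))) * ‖xj j - z‖ ^ (-((n:ℝ)+σ*p)))
                atTop (𝓝 ((-(φ z ^ (p-1))) * ‖z‖ ^ (-((n:ℝ)+σ*p)))) := hnt.const_mul _
            have hGz : G z = (-(φ z ^ (p-1))) * ‖z‖ ^ (-((n:ℝ)+σ*p)) := by
              simp only [hG_def]; rw [if_pos h6]; ring
            rw [hGz]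
            apply Tendsto.congr' ?_ hlim
            filter_upwards [eventually_ge_atTop 1] with j hj
            simp only [hh_def]
            rw [hq_lt j hj z h6, sp_neg hp (φ z) (hφ01 z).1]
          · have hqt : Tendsto (fun j => q j z) atTop (𝓝 (-(1 - ψ z))) := by
              have hu : Tendsto (fun j : ℕ => (j:ℝ)^(-(t-s))) atTop (𝓝 0) :=
                (tendsto_rpow_neg_atTop hτ).comp tendsto_natCast_atTop_atTop
              have hlin : Tendsto
                  (fun j : ℕ => (j:ℝ)^(-(t-s)) - (1 - ψ z) * ((j:ℝ)^(-(t-s)) + 1))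
                  atTop (𝓝 (0 - (1 - ψ z) * (0 + 1))) :=
                hu.sub ((hu.add tendsto_const_nhds).const_mul _)
              rw [show (0:ℝ) - (1 - ψ z) * (0 + 1) = -(1 - ψ z) by ring] at hlin
              apply Tendsto.congr' ?_ hlin
              filter_upwards [eventually_ge_atTop 1] with j hj
              exact (hq_ge j hj z h6).symm
            have hsp_t : Tendsto (fun j => |q j z| ^ (p-2) * q j z) atTop
                (𝓝 (|(-(1 - ψ z))| ^ (p-2) * (-(1 - ψ z)))) := by
              have h5 := ((sp_cont hp).tendsto _).comp hqt
              simpa only [Function.comp_def] using h5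
            have hGz : G z = (|(-(1 - ψ z))| ^ (p-2) * (-(1 - ψ z)))
                * ‖z‖ ^ (-((n:ℝ)+σ*p)) := by
              simp only [hG_def]
              rw [if_neg h6, sp_neg hp (1 - ψ z) (by linarith [(hψ01 z).2])]
              ring
            rw [hGz]
            simp only [hh_def]
            exact hsp_t.mul hnt

    -- the limit integral
    have hGval : ∫ z, G z = -(β / c) := by
      have hbase_meas : Measurable fun z : EuclideanSpace ℝ (Fin n) =>
          (if ‖z‖ < 6 then φ z else 1 - ψ z) :=
        Measurable.ite (measurableSet_lt measurable_norm measurable_const)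
          hφsm.continuous.measurable (measurable_const.sub hψsm.continuous.measurable)
      have hPm : Measurable fun z : EuclideanSpace ℝ (Fin n) =>
          (if ‖z‖ < 6 then φ z else 1 - ψ z) ^ (p - 1) :=
        (rpow_const_measurable (p-1)).comp hbase_meas
      have hPb : ∀ z : EuclideanSpace ℝ (Fin n),
          |(if ‖z‖ < 6 then φ z else 1 - ψ z) ^ (p - 1)| ≤ 1 := by
        intro z
        have h01 : 0 ≤ (if ‖z‖ < 6 then φ z else 1 - ψ z) ∧
            (if ‖z‖ < 6 then φ z else 1 - ψ z) ≤ 1 := by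
          split_ifs
          · exact ⟨(hφ01 z).1, (hφ01 z).2⟩
          · exact ⟨by linarith [(hψ01 z).2], by linarith [(hψ01 z).1]⟩
        rw [abs_of_nonneg (Real.rpow_nonneg h01.1 _)]
        exact Real.rpow_le_one h01.1 h01.2 (by linarith)
      have hP0 : ∀ z : EuclideanSpace ℝ (Fin n), ‖z‖ ≤ 3 →
          (if ‖z‖ < 6 then φ z else 1 - ψ z) ^ (p - 1) = 0 := by
        intro z hz
        rw [if_pos (by linarith : ‖z‖ < 6), hφ0 z hz, Real.zero_rpow hp1']
      have hPint : Integrable (fun z : EuclideanSpace ℝ (Fin n) =>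
          (if ‖z‖ < 6 then φ z else 1 - ψ z) ^ (p - 1) * ‖z‖ ^ (-((n:ℝ) + σ * p)))
          volume := coeff_integrable n ha_n _ hPm hPb hP0
      have hGint : ∫ z, G z = -∫ z : EuclideanSpace ℝ (Fin n),
          (if ‖z‖ < 6 then φ z else 1 - ψ z) ^ (p - 1) * ‖z‖ ^ (-((n:ℝ) + σ * p)) := by
        simp only [hG_def]
        rw [integral_neg]
      rw [hGint]
      have key : ∫ z : EuclideanSpace ℝ (Fin n),
          (if ‖z‖ < 6 then φ z else 1 - ψ z) ^ (p - 1) * ‖z‖ ^ (-((n:ℝ) + σ * p))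
          = β / c := by
        have hsplit := integral_add_compl
          (measurableSet_ball (x := (0:EuclideanSpace ℝ (Fin n))) (ε := 6)) hPint
        have hcomp : (∫ z in (Metric.ball (0:EuclideanSpace ℝ (Fin n)) 6)ᶜ,
            (if ‖z‖ < 6 then φ z else 1 - ψ z) ^ (p - 1) * ‖z‖ ^ (-((n:ℝ) + σ * p)))
            = ∫ y in (Metric.ball (0:EuclideanSpace ℝ (Fin n)) 6)ᶜ,
              (1 - ψ y) ^ (p - 1) * ‖y‖ ^ (-((n:ℝ) + σ * p)) := by
          apply setIntegral_congr_fun measurableSet_ball.compl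
          intro z hz
          have hz6 : ¬ ‖z‖ < 6 := fun hlt => hz (mem_ball_zero_iff.2 hlt)
          simp only
          rw [if_neg hz6]
        have hball : (∫ z in Metric.ball (0:EuclideanSpace ℝ (Fin n)) 6,
            (if ‖z‖ < 6 then φ z else 1 - ψ z) ^ (p - 1) * ‖z‖ ^ (-((n:ℝ) + σ * p)))
            = (∫ y in Metric.ball (0:EuclideanSpace ℝ (Fin n)) 4 \
                Metric.ball (0:EuclideanSpace ℝ (Fin n)) 3,
                φ y ^ (p - 1) * ‖y‖ ^ (-((n:ℝ) + σ * p)))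
              + ∫ y in Metric.ball (0:EuclideanSpace ℝ (Fin n)) 6 \
                Metric.ball (0:EuclideanSpace ℝ (Fin n)) 4,
                ‖y‖ ^ (-((n:ℝ) + σ * p)) := by
          have hu : Metric.ball (0:EuclideanSpace ℝ (Fin n)) 6
              = Metric.ball 0 4 ∪ (Metric.ball 0 6 \ Metric.ball 0 4) :=
            (Set.union_diff_cancel (Metric.ball_subset_ball (by norm_num))).symm
          conv_lhs => rw [hu]
          rw [setIntegral_union disjoint_sdiff_self_right
            (measurableSet_ball.diff measurableSet_ball)
            hPint.integrableOn hPint.integrableOn]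
          congr 1
          · have hu2 : Metric.ball (0:EuclideanSpace ℝ (Fin n)) 4
                = Metric.ball 0 3 ∪ (Metric.ball 0 4 \ Metric.ball 0 3) :=
              (Set.union_diff_cancel (Metric.ball_subset_ball (by norm_num))).symm
            conv_lhs => rw [hu2]
            rw [setIntegral_union disjoint_sdiff_self_right
              (measurableSet_ball.diff measurableSet_ball)
              hPint.integrableOn hPint.integrableOn]
            have hz3 : (∫ z in Metric.ball (0:EuclideanSpace ℝ (Fin n)) 3,
                (if ‖z‖ < 6 then φ z else 1 - ψ z) ^ (p - 1) * ‖z‖ ^ (-((n:ℝ) + σ * p)))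
                = 0 := by
              rw [setIntegral_congr_fun measurableSet_ball
                (g := fun _ : EuclideanSpace ℝ (Fin n) => (0:ℝ)) ?_]
              · simp
              · intro z hz
                have hz' : ‖z‖ ≤ 3 := (mem_ball_zero_iff.1 hz).le
                simp only
                rw [hP0 z hz', zero_mul]
            rw [hz3, zero_add]
            apply setIntegral_congr_fun (measurableSet_ball.diff measurableSet_ball)
            intro z hz
            have h4 : ‖z‖ < 4 := mem_ball_zero_iff.1 hz.1
            simp only
            rw [if_pos (by linarith : ‖z‖ < 6)]
          · apply setIntegral_congr_fun (measurableSet_ball.diff measurableSet_ball)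
            intro z hz
            have h6 : ‖z‖ < 6 := mem_ball_zero_iff.1 hz.1
            have h4 : (4:ℝ) ≤ ‖z‖ := by
              have hh : ¬ ‖z‖ < 4 := fun hlt => hz.2 (mem_ball_zero_iff.2 hlt)
              linarith [not_lt.1 hh]
            simp only
            rw [if_pos h6, hφ1 z h4, Real.one_rpow, one_mul]
        rw [← hsplit, hball, hcomp, hβ, mul_div_cancel_left₀ _ hc.ne']
      rw [key]

    -- A tends to -1
    have hevj' : ∀ᶠ j : ℕ in atTop, 1 ≤ j ∧ ‖x‖ + 1 < 3 * R j := by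
      filter_upwards [eventually_ge_atTop 1, hRtend.eventually_gt_atTop (‖x‖ + 1)]
        with j h1 h2
      have := hRpos j h1
      exact ⟨h1, by linarith⟩
    have hA_tend : Tendsto A atTop (𝓝 (-1)) := by
      have h2 : Tendsto (fun j => (c / β) * ∫ z, h j z) atTop (𝓝 ((c / β) * ∫ z, G z)) :=
        hDCT.const_mul (c / β)
      have h3 : (c / β) * ∫ z, G z = -1 := by
        rw [hGval]; field_simp
      rw [h3] at h2
      refine Filter.Tendsto.congr' ?_ h2
      filter_upwards [hevj'] with j hj
      exact (hAeq j hj.1 (by linarith [hj.2, norm_nonneg x])).symm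
    -- each A j is the value of the fractional p-Laplacian
    have hFrac : ∀ j : ℕ, 1 ≤ j → ‖x‖ + 1 < 3 * R j →
        Tendsto (fun ε : ℝ =>
          c * ∫ y in {y : EuclideanSpace ℝ (Fin n) | ε < ‖x - y‖},
            |v j x - v j y| ^ (p - 2) * (v j x - v j y) / ‖x - y‖ ^ ((n : ℝ) + σ * p))
          (nhdsWithin 0 (Set.Ioi 0)) (𝓝 (A j)) := by
      intro j hj hx3
      have hvx : v j x = 1 := hv1 j hj x (by linarith [norm_nonneg x])
      apply Tendsto.congr' ?_ (tendsto_const_nhds (x := A j))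
      filter_upwards [Ioo_mem_nhdsGT_of_mem (Set.mem_Ico.2 ⟨le_refl (0:ℝ), one_pos⟩)]
        with ε hε
      rw [hA_def]
      congr 1
      rw [setIntegral_eq_integral_of_forall_compl_eq_zero]
      intro y hy
      simp only [Set.mem_setOf_eq, not_lt] at hy
      have hvy : v j y = 1 := by
        apply hv1 j hj y
        have h1 : ‖y‖ ≤ ‖x‖ + ‖x - y‖ := by
          calc ‖y‖ = ‖x - (x - y)‖ := by rw [sub_sub_cancel]
          _ ≤ ‖x‖ + ‖x - y‖ := norm_sub_le _ _
        have h2 : ‖x - y‖ ≤ ε := hy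
        have h3 : ε < 1 := hε.2
        linarith
      rw [hvx, hvy, sub_self]
      simp
    -- conclude
    have hLA : ∀ᶠ j : ℕ in atTop, A j = L j := by
      filter_upwards [hevj'] with j hj
      have hLj : Tendsto (fun ε : ℝ =>
          c * ∫ y in {y : EuclideanSpace ℝ (Fin n) | ε < ‖x - y‖},
            |v j x - v j y| ^ (p - 2) * (v j x - v j y) / ‖x - y‖ ^ ((n : ℝ) + σ * p))
          (nhdsWithin 0 (Set.Ioi 0)) (𝓝 (L j)) := hL j
      exact tendsto_nhds_unique (hFrac j hj.1 hj.2) hLj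
    exact hA_tend.congr' hLA
end
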